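/- arXiv:2501.13044 — 2 statements merged into one kernel-verified Lean document; each statement's English description precedes it below -/
import Mathlib

section
/- If X satisfies the distributional identity X =_d U(X' + X''), where U is uniform on [0,1] independent of X', X'' which are independent copies of X, and X has all moments finite, then E[X^k] = k!/2^k for all k ≥ 0; consequently X is distributed as E/2 with E exponential(1). -/
open MeasureTheory ProbabilityTheory Real Set Filter
open scoped ENNReal NNReal

namespace AuxS3

noncomputable def mcf (k : ℕ) : ℝ := (Nat.factorial k : ℝ) / 2 ^ k

/-- Key fact: `x * exp (-(r*x)) ≤ 1/r`. -/
lemma mul_exp_neg_le {r x : ℝ} (hr : 0 < r) (hx : 0 ≤ x) :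
    x * Real.exp (-(r * x)) ≤ 1 / r := by
  rw [div_eq_inv_mul, mul_one]
  have h1 : r * x * Real.exp (-(r * x)) ≤ 1 := by
    have h2 : r * x + 1 ≤ Real.exp (r * x) := Real.add_one_le_exp _
    have h3 : Real.exp (-(r * x)) = (Real.exp (r * x))⁻¹ := by
      rw [Real.exp_neg]
    rw [h3, mul_inv_le_iff₀ (Real.exp_pos _), one_mul]
    nlinarith [mul_nonneg hr.le hx]
  calc x * Real.exp (-(r * x)) = r⁻¹ * (r * x * Real.exp (-(r * x))) := by
        field_simp
    _ ≤ r⁻¹ * 1 := by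
        apply mul_le_mul_of_nonneg_left h1 (by positivity)
    _ = r⁻¹ := mul_one _

noncomputable def lap (ν : Measure ℝ) (z : ℂ) : ℂ := ∫ x, Complex.exp (-z * x) ∂ν

lemma lap_integrable (ν : Measure ℝ) [IsProbabilityMeasure ν] (hν : ∀ᵐ x ∂ν, 0 ≤ x)
    {z : ℂ} (hz : 0 ≤ z.re) : Integrable (fun x : ℝ => Complex.exp (-z * x)) ν := by
  refine Integrable.mono' (integrable_const 1) ?_ ?_
  · exact (Complex.continuous_exp.comp (continuous_const.mul Complex.continuous_ofReal)).aestronglyMeasurable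
  · filter_upwards [hν] with x hx
    rw [Complex.norm_exp]
    have : (-z * x).re = -(z.re * x) := by simp [Complex.mul_re]
    rw [this]
    exact Real.exp_le_one_iff.mpr (by nlinarith)

lemma lap_analytic (ν : Measure ℝ) [IsProbabilityMeasure ν] (hν : ∀ᵐ x ∂ν, 0 ≤ x) :
    AnalyticOnNhd ℂ (lap ν) {z : ℂ | 0 < z.re} := by
  apply DifferentiableOn.analyticOnNhd (hs := isOpen_lt continuous_const Complex.continuous_re)
  intro z₀ hz₀
  have hz₀' : (0:ℝ) < z₀.re := hz₀
  set r : ℝ := z₀.re / 2 with hr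
  have hr0 : 0 < r := by positivity
  have key := hasDerivAt_integral_of_dominated_loc_of_deriv_le (μ := ν)
      (F := fun (z : ℂ) (x : ℝ) => Complex.exp (-z * x))
      (F' := fun (z : ℂ) (x : ℝ) => -(x : ℂ) * Complex.exp (-z * x))
      (x₀ := z₀) (bound := fun _ => 1 / r) (s := Metric.ball z₀ r) (Metric.ball_mem_nhds z₀ hr0)
      ?_ ?_ ?_ ?_ ?_ ?_
  · exact (key.2.differentiableAt).differentiableWithinAt
  · filter_upwards with z
    exact (Complex.continuous_exp.comp (continuous_const.mul Complex.continuous_ofReal)).aestronglyMeasurable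
  · exact lap_integrable ν hν hz₀'.le
  · exact ((Complex.continuous_ofReal.neg).mul
      (Complex.continuous_exp.comp (continuous_const.mul Complex.continuous_ofReal))).aestronglyMeasurable
  · filter_upwards [hν] with x hx
    intro z hzball
    have hzre : r ≤ z.re := by
      have hd : dist z z₀ < r := Metric.mem_ball.mp hzball
      have : |z.re - z₀.re| ≤ dist z z₀ := by simpa [Complex.dist_eq] using Complex.abs_re_le_norm (z - z₀)
      have h2 : |z.re - z₀.re| < r := lt_of_le_of_lt this hd
      have := abs_lt.mp h2
      simp only [hr] at *
      linarith [this.1]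
    rw [norm_mul, norm_neg, Complex.norm_real, Complex.norm_exp]
    have hre : (-z * x).re = -(z.re * x) := by simp [Complex.mul_re]
    rw [hre, Real.norm_eq_abs, abs_of_nonneg hx]
    calc x * Real.exp (-(z.re * x)) ≤ x * Real.exp (-(r * x)) := by
          apply mul_le_mul_of_nonneg_left _ hx
          apply Real.exp_le_exp.mpr
          nlinarith
      _ ≤ 1 / r := mul_exp_neg_le hr0 hx
  · exact integrable_const _
  · filter_upwards with x
    intro z _
    have h1 : HasDerivAt (fun z : ℂ => -z * x) (-(x:ℂ)) z := by
      simpa using ((hasDerivAt_id z).neg.mul_const (x : ℂ))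
    have := h1.cexp
    exact this.congr_deriv (by ring)

lemma lap_series (ν : Measure ℝ) [IsProbabilityMeasure ν] (hν : ∀ᵐ x ∂ν, 0 ≤ x)
    (hint : ∀ k : ℕ, Integrable (fun x : ℝ => x ^ k) ν)
    (hmom : ∀ k : ℕ, ∫ x, x ^ k ∂ν = mcf k) {s : ℝ} (hs : 0 ≤ s) (hs2 : s < 2) :
    ∫ x, Real.exp (-(s * x)) ∂ν = ∑' k : ℕ, (-s) ^ k * mcf k / (Nat.factorial k : ℝ) := by
  have hmeas : ∀ k : ℕ, AEStronglyMeasurable (fun x : ℝ => (-(s*x)) ^ k / (Nat.factorial k : ℝ)) ν :=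
    fun k => (((measurable_const.mul measurable_id').neg.pow_const k).div_const _).aestronglyMeasurable
  have hint' : ∀ k : ℕ, Integrable (fun x : ℝ => (-(s*x)) ^ k / (Nat.factorial k : ℝ)) ν := by
    intro k
    have : (fun x : ℝ => (-(s*x)) ^ k / (Nat.factorial k : ℝ))
        = fun x : ℝ => ((-s) ^ k / (Nat.factorial k : ℝ)) * x ^ k := by
      funext x; rw [show -(s*x) = (-s)*x by ring, mul_pow]; ring
    rw [this]
    exact (hint k).const_mul _
  have hlin : ∀ k : ℕ, ∫⁻ x, ‖(-(s*x)) ^ k / (Nat.factorial k : ℝ)‖₊ ∂ν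
      = ENNReal.ofReal ((s/2) ^ k) := by
    intro k
    have h1 : ∫⁻ x, ‖(-(s*x)) ^ k / (Nat.factorial k : ℝ)‖₊ ∂ν
        = ∫⁻ x, ENNReal.ofReal ((s ^ k / (Nat.factorial k : ℝ)) * x ^ k) ∂ν := by
      apply lintegral_congr_ae
      filter_upwards [hν] with x hx
      rw [← enorm_eq_nnnorm, ← ofReal_norm]
      congr 1
      rw [Real.norm_eq_abs, abs_div, abs_pow, abs_neg, abs_of_nonneg (mul_nonneg hs hx),
        Nat.abs_cast, mul_pow]
      ring
    rw [h1, ← ofReal_integral_eq_lintegral_ofReal]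
    · rw [integral_const_mul, hmom k, mcf]
      congr 1
      have hk : (Nat.factorial k : ℝ) ≠ 0 := Nat.cast_ne_zero.mpr (Nat.factorial_ne_zero k)
      rw [div_pow]
      field_simp
    · exact (hint k).const_mul _
    · filter_upwards [hν] with x hx
      positivity
  have hsum : ∑' k : ℕ, ∫⁻ x, ‖(-(s*x)) ^ k / (Nat.factorial k : ℝ)‖₊ ∂ν ≠ ⊤ := by
    simp_rw [hlin]
    rw [← ENNReal.ofReal_tsum_of_nonneg (fun k => by positivity)
      (summable_geometric_of_lt_one (by positivity) (by linarith))]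
    exact ENNReal.ofReal_ne_top
  have key := (integral_tsum hmeas hsum).symm
  have hexp : ∀ x : ℝ, (∑' k : ℕ, (-(s*x)) ^ k / (Nat.factorial k : ℝ)) = Real.exp (-(s*x)) := by
    intro x
    rw [Real.exp_eq_exp_ℝ, NormedSpace.exp_eq_tsum_div]
  calc ∫ x, Real.exp (-(s * x)) ∂ν
      = ∫ x, ∑' k : ℕ, (-(s*x)) ^ k / (Nat.factorial k : ℝ) ∂ν := by
        congr 1; funext x; rw [hexp]
    _ = ∑' k : ℕ, ∫ x, (-(s*x)) ^ k / (Nat.factorial k : ℝ) ∂ν := key.symm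
    _ = ∑' k : ℕ, (-s) ^ k * mcf k / (Nat.factorial k : ℝ) := by
        congr 1; funext k
        have : (fun x : ℝ => (-(s*x)) ^ k / (Nat.factorial k : ℝ))
            = fun x : ℝ => ((-s) ^ k / (Nat.factorial k : ℝ)) * x ^ k := by
          funext x; rw [show -(s*x) = (-s)*x by ring, mul_pow]; ring
        rw [this, integral_const_mul, hmom k]
        ring

lemma integral_eq_of_moments_Icc (P Q : Measure ℝ) [IsProbabilityMeasure P]
    [IsProbabilityMeasure Q]
    (hP : ∀ᵐ x ∂P, x ∈ Icc (0:ℝ) 1) (hQ : ∀ᵐ x ∂Q, x ∈ Icc (0:ℝ) 1)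
    (h : ∀ n : ℕ, ∫ x, x ^ n ∂P = ∫ x, x ^ n ∂Q)
    (g : ℝ → ℝ) (hg : Continuous g) {C : ℝ} (hgb : ∀ x, |g x| ≤ C) :
    ∫ x, g x ∂P = ∫ x, g x ∂Q := by
  -- integrability facts
  have hpowint : ∀ (m : Measure ℝ), IsProbabilityMeasure m → (∀ᵐ x ∂m, x ∈ Icc (0:ℝ) 1) →
      ∀ n : ℕ, Integrable (fun x : ℝ => x ^ n) m := by
    intro m _ hm n
    refine Integrable.mono' (integrable_const 1) (measurable_id.pow_const n).aestronglyMeasurable ?_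
    filter_upwards [hm] with x hx
    rw [Real.norm_eq_abs, abs_pow, abs_of_nonneg hx.1]
    exact pow_le_one₀ hx.1 hx.2
  have hgint : ∀ (m : Measure ℝ), IsProbabilityMeasure m → Integrable g m := by
    intro m _
    exact Integrable.mono' (integrable_const C) hg.aestronglyMeasurable
      (Eventually.of_forall fun x => hgb x)
  -- polynomial integrals agree
  have hpoly : ∀ p : Polynomial ℝ,
      (∀ (m : Measure ℝ), IsProbabilityMeasure m → (∀ᵐ x ∂m, x ∈ Icc (0:ℝ) 1) →
        Integrable (fun x => Polynomial.eval x p) m) ∧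
      ∫ x, Polynomial.eval x p ∂P = ∫ x, Polynomial.eval x p ∂Q := by
    intro p
    have hev : (fun x : ℝ => Polynomial.eval x p)
        = fun x : ℝ => ∑ i ∈ Finset.range (p.natDegree + 1), p.coeff i * x ^ i := by
      funext x; exact Polynomial.eval_eq_sum_range _
    constructor
    · intro m hm hma
      rw [hev]
      exact integrable_finset_sum _ fun i _ => ((hpowint m hm hma i).const_mul _)
    · rw [hev, integral_finset_sum _ (fun i _ => ((hpowint P inferInstance hP i).const_mul _)),
        integral_finset_sum _ (fun i _ => ((hpowint Q inferInstance hQ i).const_mul _))]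
      refine Finset.sum_congr rfl fun i _ => ?_
      rw [integral_const_mul, integral_const_mul, h i]
  -- epsilon argument
  have key : ∀ ε : ℝ, 0 < ε → |(∫ x, g x ∂P) - ∫ x, g x ∂Q| ≤ 2 * ε := by
    intro ε hε
    obtain ⟨p, hp⟩ := exists_polynomial_near_of_continuousOn 0 1 g hg.continuousOn ε hε
    have hpi := hpoly p
    have hbd : ∀ (m : Measure ℝ), IsProbabilityMeasure m → (∀ᵐ x ∂m, x ∈ Icc (0:ℝ) 1) →
        Integrable (fun x => Polynomial.eval x p) m →
        |(∫ x, g x ∂m) - ∫ x, Polynomial.eval x p ∂m| ≤ ε := by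
      intro m hm hma hint
      rw [← integral_sub (hgint m hm) hint]
      have := norm_integral_le_of_norm_le_const (μ := m)
        (f := fun x => g x - Polynomial.eval x p) (C := ε) ?_
      · simpa using this
      · filter_upwards [hma] with x hx
        rw [Real.norm_eq_abs, abs_sub_comm]
        exact (hp x hx).le
    have h1 := hbd P inferInstance hP (hpi.1 P inferInstance hP)
    have h2 := hbd Q inferInstance hQ (hpi.1 Q inferInstance hQ)
    calc |(∫ x, g x ∂P) - ∫ x, g x ∂Q|
        = |((∫ x, g x ∂P) - ∫ x, Polynomial.eval x p ∂P)
            - ((∫ x, g x ∂Q) - ∫ x, Polynomial.eval x p ∂Q)| := by rw [hpi.2]; ring_nf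
      _ ≤ |(∫ x, g x ∂P) - ∫ x, Polynomial.eval x p ∂P|
            + |(∫ x, g x ∂Q) - ∫ x, Polynomial.eval x p ∂Q| := abs_sub _ _
      _ ≤ 2 * ε := by linarith
  by_contra hne
  have hpos : 0 < |(∫ x, g x ∂P) - ∫ x, g x ∂Q| := by
    rw [abs_pos, sub_ne_zero]; exact hne
  have := key (|(∫ x, g x ∂P) - ∫ x, g x ∂Q| / 4) (by linarith)
  linarith

lemma measure_eq_of_moments_Icc (P Q : Measure ℝ) [IsProbabilityMeasure P]
    [IsProbabilityMeasure Q]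
    (hP : ∀ᵐ x ∂P, x ∈ Icc (0:ℝ) 1) (hQ : ∀ᵐ x ∂Q, x ∈ Icc (0:ℝ) 1)
    (h : ∀ n : ℕ, ∫ x, x ^ n ∂P = ∫ x, x ^ n ∂Q) : P = Q := by
  apply ext_of_forall_lintegral_eq_of_IsFiniteMeasure
  intro f
  have h1 := BoundedContinuousFunction.toReal_lintegral_coe_eq_integral f P
  have h2 := BoundedContinuousFunction.toReal_lintegral_coe_eq_integral f Q
  have hC : ∀ x : ℝ, |((f x : ℝ))| ≤ (nndist 0 f : ℝ) := by
    intro x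
    rw [abs_of_nonneg (f x).coe_nonneg]
    exact_mod_cast f.apply_le_nndist_zero x
  have heq := integral_eq_of_moments_Icc P Q hP hQ h (fun x => (f x : ℝ))
    (NNReal.continuous_coe.comp f.continuous) hC
  have := h1.trans (heq.trans h2.symm)
  exact (ENNReal.toReal_eq_toReal_iff'
    (BoundedContinuousFunction.lintegral_lt_top_of_nnreal _ f).ne
    (BoundedContinuousFunction.lintegral_lt_top_of_nnreal _ f).ne).mp this


lemma lap_real (ν : Measure ℝ) [IsProbabilityMeasure ν] (hν : ∀ᵐ x ∂ν, 0 ≤ x)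
    {s : ℝ} (hs : 0 ≤ s) :
    lap ν (s : ℂ) = ((∫ x, Real.exp (-(s * x)) ∂ν : ℝ) : ℂ) := by
  rw [lap]
  have hpt : ∀ x : ℝ, Complex.exp (-(s:ℂ) * x) = ((Real.exp (-(s * x)) : ℝ) : ℂ) := by
    intro x
    rw [Complex.ofReal_exp]
    congr 1
    push_cast
    ring
  simp_rw [hpt]
  exact integral_ofReal

lemma moments_determine (ν ρ : Measure ℝ) [IsProbabilityMeasure ν] [IsProbabilityMeasure ρ]
    (hν : ∀ᵐ x ∂ν, 0 ≤ x) (hρ : ∀ᵐ x ∂ρ, 0 ≤ x)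
    (hintν : ∀ k : ℕ, Integrable (fun x : ℝ => x ^ k) ν)
    (hintρ : ∀ k : ℕ, Integrable (fun x : ℝ => x ^ k) ρ)
    (hmomν : ∀ k : ℕ, ∫ x, x ^ k ∂ν = mcf k)
    (hmomρ : ∀ k : ℕ, ∫ x, x ^ k ∂ρ = mcf k) : ν = ρ := by
  -- Laplace transforms agree on reals in (0,2)
  have hreal : ∀ s : ℝ, 0 ≤ s → s < 2 → lap ν s = lap ρ s := by
    intro s hs hs2
    rw [lap_real ν hν hs, lap_real ρ hρ hs,
      lap_series ν hν hintν hmomν hs hs2, lap_series ρ hρ hintρ hmomρ hs hs2]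
  -- identity theorem: they agree on the right half plane
  have hEq : EqOn (lap ν) (lap ρ) {z : ℂ | 0 < z.re} := by
    apply AnalyticOnNhd.eqOn_of_preconnected_of_frequently_eq
      (lap_analytic ν hν) (lap_analytic ρ hρ)
      ((convex_halfSpace_re_gt 0).isPreconnected) (by norm_num : (1:ℂ) ∈ {z : ℂ | 0 < z.re})
    -- frequently equal near 1
    have htend : Tendsto (fun n : ℕ => ((1 + 1/(n+2) : ℝ) : ℂ)) atTop (nhdsWithin 1 {(1:ℂ)}ᶜ) := by
      apply tendsto_nhdsWithin_of_tendsto_nhds_of_eventually_within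
      · have : Tendsto (fun n : ℕ => (1 + 1/(n+2) : ℝ)) atTop (nhds 1) := by
          have := tendsto_one_div_add_atTop_nhds_zero_nat (𝕜 := ℝ)
          have h2 : Tendsto (fun n : ℕ => (1/(n+2) : ℝ)) atTop (nhds 0) := by
            have : (fun n : ℕ => (1/(n+2) : ℝ)) = (fun n : ℕ => 1/(n+1:ℝ)) ∘ (fun n => n+1) := by
              funext n; simp; ring_nf
            rw [this]
            exact tendsto_one_div_add_atTop_nhds_zero_nat.comp (tendsto_add_atTop_nat 1)
          simpa using tendsto_const_nhds.add h2
        have hcont : Tendsto (fun x : ℝ => (x : ℂ)) (nhds 1) (nhds 1) := by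
          simpa using Complex.continuous_ofReal.tendsto 1
        exact hcont.comp this
      · filter_upwards with n
        simp only [mem_compl_iff, mem_singleton_iff]
        intro hcon
        have : (1 + 1/(n+2) : ℝ) = 1 := by exact_mod_cast hcon
        have h2 : (0:ℝ) < 1/(n+2) := by positivity
        linarith
    apply htend.frequently
    apply Frequently.of_forall
    intro n
    have h1 : (0:ℝ) ≤ 1 + 1/(n+2) := by positivity
    have h2 : (1 + 1/(n+2) : ℝ) < 2 := by
      have : (1/(n+2:ℝ)) ≤ 1/2 := by
        apply div_le_div_of_nonneg_left (by norm_num) (by norm_num)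
        exact_mod_cast by linarith [Nat.cast_nonneg (α := ℝ) n]
      linarith
    exact hreal _ h1 h2
  -- hence the integrals of exp(-n x) agree for all n ≥ 1
  have hn : ∀ n : ℕ, ∫ x, Real.exp (-x) ^ n ∂ν = ∫ x, Real.exp (-x) ^ n ∂ρ := by
    intro n
    rcases Nat.eq_zero_or_pos n with hn0 | hn1
    · simp [hn0]
    · have hmem : ((n:ℂ)) ∈ {z : ℂ | 0 < z.re} := by
        simp only [mem_setOf_eq, Complex.natCast_re]
        exact_mod_cast hn1
      have := hEq hmem
      rw [show ((n:ℂ)) = (((n:ℝ)):ℂ) by push_cast; rfl] at this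
      rw [lap_real ν hν (by positivity), lap_real ρ hρ (by positivity)] at this
      have heq : (∫ x, Real.exp (-((n:ℝ) * x)) ∂ν) = ∫ x, Real.exp (-((n:ℝ) * x)) ∂ρ := by
        exact_mod_cast this
      have hrw : ∀ x : ℝ, Real.exp (-((n:ℝ) * x)) = Real.exp (-x) ^ n := by
        intro x
        rw [← Real.exp_nat_mul]
        congr 1; ring
      simp_rw [hrw] at heq
      exact heq
  -- pushforward under x ↦ exp (-x)
  set g : ℝ → ℝ := fun x => Real.exp (-x) with hg
  have hgm : Measurable g := (Real.continuous_exp.comp continuous_neg).measurable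
  have hmapmom : ∀ (m : Measure ℝ), (∀ᵐ x ∂m, 0 ≤ x) → IsProbabilityMeasure m →
      (∀ᵐ y ∂(Measure.map g m), y ∈ Icc (0:ℝ) 1) ∧
      (∀ n : ℕ, ∫ y, y ^ n ∂(Measure.map g m) = ∫ x, Real.exp (-x) ^ n ∂m) := by
    intro m hm _
    constructor
    · apply (ae_map_iff hgm.aemeasurable measurableSet_Icc).mpr
      filter_upwards [hm] with x hx
      constructor
      · exact (Real.exp_pos _).le
      · exact Real.exp_le_one_iff.mpr (by linarith)
    · intro n
      exact integral_map hgm.aemeasurable ((continuous_pow n).aestronglyMeasurable)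
  haveI : IsProbabilityMeasure (Measure.map g ν) := Measure.isProbabilityMeasure_map hgm.aemeasurable
  haveI : IsProbabilityMeasure (Measure.map g ρ) := Measure.isProbabilityMeasure_map hgm.aemeasurable
  have hν' := hmapmom ν hν inferInstance
  have hρ' := hmapmom ρ hρ inferInstance
  have hmapeq : Measure.map g ν = Measure.map g ρ := by
    apply measure_eq_of_moments_Icc _ _ hν'.1 hρ'.1
    intro n
    rw [hν'.2 n, hρ'.2 n, hn n]
  -- recover the measures via -log
  have hlm : Measurable (fun y : ℝ => -Real.log y) := Real.measurable_log.neg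
  have hcomp : ∀ (m : Measure ℝ), Measure.map (fun y : ℝ => -Real.log y) (Measure.map g m) = m := by
    intro m
    rw [Measure.map_map hlm hgm]
    have : ((fun y : ℝ => -Real.log y) ∘ g) = id := by
      funext x
      simp [hg, Real.log_exp]
    rw [this, Measure.map_id]
  calc ν = Measure.map (fun y : ℝ => -Real.log y) (Measure.map g ν) := (hcomp ν).symm
    _ = Measure.map (fun y : ℝ => -Real.log y) (Measure.map g ρ) := by rw [hmapeq]
    _ = ρ := hcomp ρ


lemma moments_eq
    {Ω : Type*} [MeasurableSpace Ω] (μ : Measure Ω) [IsProbabilityMeasure μ]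
    (X X' X'' U : Ω → ℝ)
    (hX : Measurable X) (hX' : Measurable X') (hX'' : Measurable X'')
    (hU : Measurable U)
    (hmoments : ∀ k : ℕ, Integrable (fun ω => X ω ^ k) μ)
    (hmean : ∫ ω, X ω ∂μ = 1 / 2)
    (hcopy' : Measure.map X' μ = Measure.map X μ)
    (hcopy'' : Measure.map X'' μ = Measure.map X μ)
    (hUunif : Measure.map U μ = volume.restrict (Set.Icc (0 : ℝ) 1))
    (hindep : iIndepFun ![U, X', X''] μ)
    (hfix : Measure.map X μ = Measure.map (fun ω => U ω * (X' ω + X'' ω)) μ) :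
    ∀ k : ℕ, ∫ ω, X ω ^ k ∂μ = mcf k := by
  set a : ℕ → ℝ := fun k => ∫ ω, X ω ^ k ∂μ with ha
  -- copies have the same moments and integrability
  have hcopies : ∀ (Y : Ω → ℝ), Measurable Y → Measure.map Y μ = Measure.map X μ →
      ∀ k : ℕ, (∫ ω, Y ω ^ k ∂μ = a k) ∧ Integrable (fun ω => Y ω ^ k) μ := by
    intro Y hY hmap k
    have hXk : ∫ ω, X ω ^ k ∂μ = ∫ x, x ^ k ∂(Measure.map X μ) :=
      (integral_map hX.aemeasurable (continuous_pow k).aestronglyMeasurable).symm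
    have hYk : ∫ ω, Y ω ^ k ∂μ = ∫ x, x ^ k ∂(Measure.map Y μ) :=
      (integral_map hY.aemeasurable (continuous_pow k).aestronglyMeasurable).symm
    constructor
    · rw [hYk, hmap, ← hXk]
    · have hi : Integrable (fun x : ℝ => x ^ k) (Measure.map X μ) := by
        rw [integrable_map_measure (continuous_pow k).aestronglyMeasurable hX.aemeasurable]
        exact hmoments k
      rw [← hmap] at hi
      have := (integrable_map_measure (continuous_pow k).aestronglyMeasurable
        hY.aemeasurable).mp hi
      exact this
  -- moments of U
  have hUk : ∀ k : ℕ, ∫ ω, U ω ^ k ∂μ = 1 / (k + 1) := by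
    intro k
    rw [← integral_map hU.aemeasurable (continuous_pow k).aestronglyMeasurable, hUunif]
    rw [integral_Icc_eq_integral_Ioc, ← intervalIntegral.integral_of_le (by norm_num : (0:ℝ) ≤ 1)]
    rw [integral_pow]
    simp
  have hUint : ∀ k : ℕ, Integrable (fun ω => U ω ^ k) μ := by
    intro k
    have hi : Integrable (fun x : ℝ => x ^ k) (volume.restrict (Set.Icc (0:ℝ) 1)) := by
      haveI : IsFiniteMeasure (volume.restrict (Set.Icc (0:ℝ) 1)) := by
        constructor
        rw [Measure.restrict_apply_univ, Real.volume_Icc]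
        exact ENNReal.ofReal_lt_top
      refine Integrable.mono' (integrable_const 1) (continuous_pow k).aestronglyMeasurable ?_
      refine (ae_restrict_iff' measurableSet_Icc).mpr (Eventually.of_forall fun x hx => ?_)
      rw [Real.norm_eq_abs, abs_pow, abs_of_nonneg hx.1]
      exact pow_le_one₀ hx.1 hx.2
    rw [← hUunif] at hi
    exact (integrable_map_measure (continuous_pow k).aestronglyMeasurable hU.aemeasurable).mp hi
  -- independence facts
  have hmeas3 : ∀ i : Fin 3, Measurable (![U, X', X''] i) := by
    intro i
    fin_cases i
    · exact hU
    · exact hX'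
    · exact hX''
  have h12 : IndepFun X' X'' μ := by
    have := hindep.indepFun (i := 1) (j := 2) (by decide)
    simpa using this
  have hUsum : IndepFun U (fun ω => X' ω + X'' ω) μ := by
    have h := hindep.indepFun_prodMk hmeas3 1 2 0 (by decide) (by decide)
    have h2 := h.comp (measurable_fst.add measurable_snd) measurable_id
    exact (h2.symm : IndepFun _ _ μ)
  -- the recursion
  have hsumint : ∀ k : ℕ, Integrable (fun ω => (X' ω + X'' ω) ^ k) μ := by
    intro k
    simp_rw [add_pow]
    apply integrable_finset_sum
    intro i hi
    apply Integrable.mul_const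
    exact (h12.comp (measurable_id.pow_const i) (measurable_id.pow_const (k - i))).integrable_mul
      (hcopies X' hX' hcopy' i).2 (hcopies X'' hX'' hcopy'' (k - i)).2
  have hsummom : ∀ k : ℕ, ∫ ω, (X' ω + X'' ω) ^ k ∂μ
      = ∑ i ∈ Finset.range (k + 1), (k.choose i : ℝ) * a i * a (k - i) := by
    intro k
    simp_rw [add_pow]
    rw [integral_finset_sum]
    · refine Finset.sum_congr rfl fun i hi => ?_
      rw [integral_mul_const]
      have hmul := (h12.comp (measurable_id.pow_const i)
        (measurable_id.pow_const (k - i))).integral_fun_mul_eq_mul_integral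
        (hcopies X' hX' hcopy' i).2.aestronglyMeasurable (hcopies X'' hX'' hcopy'' (k - i)).2.aestronglyMeasurable
      have hthis : ∫ ω, X' ω ^ i * X'' ω ^ (k - i) ∂μ = a i * a (k - i) := by
        rw [← (hcopies X' hX' hcopy' i).1, ← (hcopies X'' hX'' hcopy'' (k - i)).1]
        exact hmul
      rw [hthis]; ring
    · intro i hi
      apply Integrable.mul_const
      exact (h12.comp (measurable_id.pow_const i) (measurable_id.pow_const (k - i))).integrable_mul
        (hcopies X' hX' hcopy' i).2 (hcopies X'' hX'' hcopy'' (k - i)).2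
  have hrec : ∀ k : ℕ, ((k:ℝ) + 1) * a k
      = ∑ i ∈ Finset.range (k + 1), (k.choose i : ℝ) * a i * a (k - i) := by
    intro k
    have h1 : a k = ∫ ω, (U ω * (X' ω + X'' ω)) ^ k ∂μ := by
      have hmeasR : Measurable fun ω => U ω * (X' ω + X'' ω) := hU.mul (hX'.add hX'')
      calc a k = ∫ x, x ^ k ∂(Measure.map X μ) :=
            (integral_map hX.aemeasurable (continuous_pow k).aestronglyMeasurable).symm
        _ = ∫ x, x ^ k ∂(Measure.map (fun ω => U ω * (X' ω + X'' ω)) μ) := by rw [hfix]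
        _ = ∫ ω, (U ω * (X' ω + X'' ω)) ^ k ∂μ :=
            integral_map hmeasR.aemeasurable (continuous_pow k).aestronglyMeasurable
    have h2 : ∫ ω, (U ω * (X' ω + X'' ω)) ^ k ∂μ
        = (∫ ω, U ω ^ k ∂μ) * ∫ ω, (X' ω + X'' ω) ^ k ∂μ := by
      simp_rw [mul_pow]
      have hind := hUsum.comp (measurable_id.pow_const k) (measurable_id.pow_const k)
      have := hind.integral_fun_mul_eq_mul_integral (hUint k).aestronglyMeasurable (hsumint k).aestronglyMeasurable
      simpa using this
    have h3 := hsummom k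
    have hk1 : ((k:ℝ) + 1) ≠ 0 := by positivity
    rw [h1, h2, hUk k, h3]
    field_simp
  -- base cases
  have ha0 : a 0 = 1 := by simp [ha]
  have ha1 : a 1 = 1 / 2 := by simpa [ha] using hmean
  -- strong induction
  intro k
  show a k = mcf k
  induction k using Nat.strong_induction_on with
  | _ k ih =>
    match k, ih with
    | 0, _ => rw [ha0]; simp [mcf]
    | 1, _ => rw [ha1]; norm_num [mcf]
    | (m + 2), ih =>
      set k := m + 2 with hk
      have hsplit : Finset.range (k + 1) = insert 0 (insert k (Finset.Ioo 0 k)) := by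
        ext i
        simp only [Finset.mem_range, Finset.mem_insert, Finset.mem_Ioo]
        omega
      have hS := hrec k
      rw [hsplit, Finset.sum_insert (by simp only [Finset.mem_insert, Finset.mem_Ioo]; omega),
        Finset.sum_insert (by simp only [Finset.mem_Ioo]; omega)] at hS
      have hterm : ∀ i ∈ Finset.Ioo 0 k, (k.choose i : ℝ) * a i * a (k - i) = mcf k := by
        intro i hi
        simp only [Finset.mem_Ioo] at hi
        rw [ih i (by omega), ih (k - i) (by omega)]
        simp only [mcf]
        have hfac : (k.choose i : ℝ) * (Nat.factorial i : ℝ) * (Nat.factorial (k - i) : ℝ)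
            = (Nat.factorial k : ℝ) := by
          exact_mod_cast congrArg (Nat.cast (R := ℝ))
            (Nat.choose_mul_factorial_mul_factorial (le_of_lt hi.2))
        have hpow : (2:ℝ) ^ i * 2 ^ (k - i) = 2 ^ k := by
          rw [← pow_add]
          congr 1
          omega
        field_simp
        rw [hfac, hpow]; ring
      have hcard : (Finset.Ioo 0 k).card = m + 1 := by rw [Nat.card_Ioo]; omega
      rw [Finset.sum_congr rfl hterm, Finset.sum_const, hcard, nsmul_eq_mul] at hS
      have h0term : (↑(k.choose 0) : ℝ) * a 0 * a (k - 0) = a k := by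
        simp [ha0]
      have hkterm : (↑(k.choose k) : ℝ) * a k * a (k - k) = a k := by
        simp [ha0]
      rw [h0term, hkterm] at hS
      have hkr : (k:ℝ) = (m:ℝ) + 2 := by rw [hk]; push_cast; ring
      rw [hkr] at hS
      have hne : ((m:ℝ) + 1) ≠ 0 := by positivity
      apply mul_left_cancel₀ hne
      push_cast at hS ⊢
      linear_combination hS


lemma gammaPDFReal_one_one (x : ℝ) :
    gammaPDFReal 1 1 x = if 0 ≤ x then Real.exp (-x) else 0 := by
  simp [gammaPDFReal, Real.Gamma_one, Real.rpow_zero, Real.one_rpow, one_mul, sub_self, div_one]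

lemma expMeasure_one_eq : expMeasure 1 = volume.withDensity (gammaPDF 1 1) := rfl

lemma expMeasure_ae_nonneg : ∀ᵐ x ∂(expMeasure 1), 0 ≤ x := by
  rw [ae_iff]
  have hset : {x : ℝ | ¬ 0 ≤ x} = Iio 0 := by ext x; simp
  rw [hset, expMeasure_one_eq, withDensity_apply _ measurableSet_Iio]
  exact lintegral_gammaPDF_of_nonpos le_rfl

lemma exp_mul_pow_integrableOn (k : ℕ) :
    IntegrableOn (fun x : ℝ => x ^ k * Real.exp (-x)) (Ioi (0:ℝ)) := by
  have h := Real.GammaIntegral_convergent (s := (k:ℝ) + 1) (by positivity)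
  apply h.congr_fun _ measurableSet_Ioi
  intro x hx
  simp only [add_sub_cancel_right, Real.rpow_natCast]
  ring

lemma expMeasure_moment (k : ℕ) :
    Integrable (fun x : ℝ => x ^ k) (expMeasure 1) ∧
    ∫ x, x ^ k ∂(expMeasure 1) = (Nat.factorial k : ℝ) := by
  have hpdfm : Measurable (gammaPDF 1 1) :=
    (measurable_gammaPDFReal 1 1).ennreal_ofReal
  have hlt : ∀ᵐ x ∂(volume : Measure ℝ), gammaPDF 1 1 x < ⊤ := by
    filter_upwards with x
    exact ENNReal.ofReal_lt_top
  have htoReal : ∀ x : ℝ, (gammaPDF 1 1 x).toReal = gammaPDFReal 1 1 x := by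
    intro x
    rw [gammaPDF, ENNReal.toReal_ofReal (gammaPDFReal_nonneg one_pos one_pos x)]
  have hind : (fun x : ℝ => x ^ k * (gammaPDF 1 1 x).toReal)
      = Set.indicator (Ici (0:ℝ)) (fun x => x ^ k * Real.exp (-x)) := by
    funext x
    rw [htoReal, gammaPDFReal_one_one]
    by_cases hx : 0 ≤ x
    · rw [if_pos hx, Set.indicator_of_mem (mem_Ici.mpr hx)]
    · rw [if_neg hx, Set.indicator_of_notMem (by simpa using hx), mul_zero]
  have hInt : Integrable (fun x : ℝ => x ^ k) (expMeasure 1) := by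
    rw [expMeasure_one_eq, integrable_withDensity_iff hpdfm hlt]
    rw [hind]
    rw [integrable_indicator_iff measurableSet_Ici]
    rw [integrableOn_Ici_iff_integrableOn_Ioi]
    exact exp_mul_pow_integrableOn k
  refine ⟨hInt, ?_⟩
  have h1 : ∫ x, x ^ k ∂(expMeasure 1)
      = ∫ x, ((gammaPDF 1 1 x).toReal) • (x ^ k) ∂volume := by
    rw [expMeasure_one_eq]
    have := integral_withDensity_eq_integral_smul (μ := (volume : Measure ℝ))
      ((measurable_gammaPDFReal 1 1).real_toNNReal) (fun x : ℝ => x ^ k)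
    have heq : volume.withDensity (gammaPDF 1 1)
        = volume.withDensity (fun x => ((gammaPDFReal 1 1 x).toNNReal : ℝ≥0∞)) := rfl
    rw [heq, this]
    congr 1
  rw [h1]
  have h2 : (fun x : ℝ => ((gammaPDF 1 1 x).toReal) • (x ^ k))
      = Set.indicator (Ici (0:ℝ)) (fun x => x ^ k * Real.exp (-x)) := by
    rw [← hind]
    funext x
    rw [smul_eq_mul]
    ring
  rw [h2, integral_indicator measurableSet_Ici, integral_Ici_eq_integral_Ioi]
  have h3 : ∫ x in Ioi (0:ℝ), x ^ k * Real.exp (-x)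
      = ∫ x in Ioi (0:ℝ), Real.exp (-x) * x ^ (((k:ℝ) + 1) - 1) := by
    apply setIntegral_congr_fun measurableSet_Ioi
    intro x hx
    simp only [add_sub_cancel_right, Real.rpow_natCast]
    ring
  rw [h3, ← Real.Gamma_eq_integral (by positivity)]
  rw [show ((k:ℝ) + 1) = ((k:ℕ) + 1 : ℕ) by push_cast; ring]
  exact_mod_cast Real.Gamma_nat_eq_factorial k


end AuxS3

open AuxS3

/-- If `X ≥ 0` has mean `1/2`, all moments finite, and satisfies the distributional
identity `X =_d U (X' + X'')` with `U` uniform on `[0,1]` independent of the independent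
copies `X', X''` of `X`, then `E[X^k] = k!/2^k` for all `k`, and `X` is distributed as
half an exponential(1) random variable. -/
theorem statement_3
    {Ω : Type*} [MeasurableSpace Ω] (μ : Measure Ω) [IsProbabilityMeasure μ]
    (X X' X'' U : Ω → ℝ)
    (hX : Measurable X) (hX' : Measurable X') (hX'' : Measurable X'')
    (hU : Measurable U)
    (hXnonneg : ∀ ω, 0 ≤ X ω)
    (hmoments : ∀ k : ℕ, Integrable (fun ω => X ω ^ k) μ)
    (hmean : ∫ ω, X ω ∂μ = 1 / 2)
    (hcopy' : Measure.map X' μ = Measure.map X μ)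
    (hcopy'' : Measure.map X'' μ = Measure.map X μ)
    (hUunif : Measure.map U μ = volume.restrict (Set.Icc (0 : ℝ) 1))
    (hindep : iIndepFun ![U, X', X''] μ)
    (hfix : Measure.map X μ = Measure.map (fun ω => U ω * (X' ω + X'' ω)) μ) :
    (∀ k : ℕ, ∫ ω, X ω ^ k ∂μ = (Nat.factorial k : ℝ) / 2 ^ k) ∧
      Measure.map X μ = Measure.map (fun x : ℝ => x / 2) (expMeasure 1) := by
  have hmom : ∀ k : ℕ, ∫ ω, X ω ^ k ∂μ = mcf k :=
    moments_eq μ X X' X'' U hX hX' hX'' hU hmoments hmean hcopy' hcopy'' hUunif hindep hfix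
  refine ⟨fun k => by simpa [mcf] using hmom k, ?_⟩
  set ν := Measure.map X μ with hν
  set ρ := Measure.map (fun x : ℝ => x / 2) (expMeasure 1) with hρ
  haveI : IsProbabilityMeasure ν := Measure.isProbabilityMeasure_map hX.aemeasurable
  haveI : IsProbabilityMeasure (expMeasure 1) := isProbabilityMeasure_expMeasure one_pos
  have hhalf : Measurable (fun x : ℝ => x / 2) := measurable_id.div_const 2
  haveI : IsProbabilityMeasure ρ := Measure.isProbabilityMeasure_map hhalf.aemeasurable
  apply moments_determine ν ρ
  · -- ν a.e. nonneg
    refine (ae_map_iff (p := fun x : ℝ => x ∈ Ici (0:ℝ)) hX.aemeasurable measurableSet_Ici).mpr ?_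
    exact Eventually.of_forall fun ω => hXnonneg ω
  · -- ρ a.e. nonneg
    refine (ae_map_iff (p := fun x : ℝ => x ∈ Ici (0:ℝ)) hhalf.aemeasurable
      measurableSet_Ici).mpr ?_
    filter_upwards [expMeasure_ae_nonneg] with x hx
    simpa using by linarith
  · -- ν integrable moments
    intro k
    exact (integrable_map_measure (continuous_pow k).aestronglyMeasurable
      hX.aemeasurable).mpr (hmoments k)
  · -- ρ integrable moments
    intro k
    refine (integrable_map_measure (continuous_pow k).aestronglyMeasurable
      hhalf.aemeasurable).mpr ?_
    have : ((fun x : ℝ => x ^ k) ∘ (fun x : ℝ => x / 2))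
        = fun x : ℝ => (1 / 2 ^ k) * x ^ k := by
      funext x
      simp [div_pow]
      ring
    rw [this]
    exact (expMeasure_moment k).1.const_mul _
  · -- ν moments
    intro k
    rw [hν, integral_map hX.aemeasurable (continuous_pow k).aestronglyMeasurable]
    exact hmom k
  · -- ρ moments
    intro k
    rw [hρ, integral_map hhalf.aemeasurable (continuous_pow k).aestronglyMeasurable]
    have : (fun x : ℝ => (x / 2) ^ k) = fun x : ℝ => (1 / 2 ^ k) * x ^ k := by
      funext x
      simp [div_pow]
      ring
    simp_rw [div_pow]
    rw [integral_div, (expMeasure_moment k).2, mcf]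
end

section
/- The second moment of the size of a p-percolated uniform temporal tree satisfies E|T_{n,p}|^2 ≤ 5 e^{2np} = 5 (E|T_{n,p}|)^2 for all n ≥ 1 and p ∈ (0,1]. -/
open MeasureTheory ProbabilityTheory
open scoped ENNReal

/-- The path from the root to the vertex `v` of the infinite `n`-ary tree (vertices are
encoded as lists over `Fin n`, the label of a vertex being the label of the edge to its
parent, given by `f`) has strictly decreasing labels, all at most `p`. -/
def DecreasingPath {n : ℕ} (f : List (Fin n) → ℝ) (p : ℝ) (v : List (Fin n)) : Prop :=
  (∀ i j : ℕ, i < j → j < v.length → f (v.take (j + 1)) < f (v.take (i + 1))) ∧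
  (∀ i : ℕ, i < v.length → f (v.take (i + 1)) ≤ p)

open Classical in
/-- The number of vertices of the `p`-percolated uniform temporal tree, for a given
assignment `f` of labels to the vertices of the infinite `n`-ary tree. -/
noncomputable def treeSize (n : ℕ) (p : ℝ) (f : List (Fin n) → ℝ) : ℝ≥0∞ :=
  ∑' v : List (Fin n), if DecreasingPath f p v then 1 else 0

namespace Statement6Aux


noncomputable def nu1 : Measure ℝ := volume.restrict (Set.Icc (0:ℝ) 1)

instance : IsProbabilityMeasure nu1 := ⟨by simp [nu1, Real.volume_Icc]⟩

noncomputable def nu (m : ℕ) : Measure (Fin m → ℝ) := Measure.pi fun _ => nu1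

instance (m : ℕ) : IsProbabilityMeasure (nu m) := by
  unfold nu; infer_instance

def Evt (k s : ℕ) (p : ℝ) {m : ℕ} (y : Fin m → ℝ) : Prop :=
  (∀ i, y i ≤ p) ∧
  (∀ i j : Fin m, i < j → (j : ℕ) < k + s → y j < y i) ∧
  (∀ i j : Fin m, i < j → k + s ≤ (i : ℕ) → y j < y i) ∧
  (∀ i j : Fin m, (i : ℕ) + 1 = k → (j : ℕ) = k + s → y j < y i)

lemma measurableSet_evt (k s : ℕ) (p : ℝ) (m : ℕ) :
    MeasurableSet {y : Fin m → ℝ | Evt k s p y} := by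
  have himp : ∀ (P : Prop) (S : Set (Fin m → ℝ)), MeasurableSet S →
      MeasurableSet {y : Fin m → ℝ | P → y ∈ S} := by
    intro P S hS
    by_cases h : P
    · simp only [h, forall_true_left]; exact hS
    · simp only [h]; simp
  have h1 : ∀ i : Fin m, MeasurableSet {y : Fin m → ℝ | y i ≤ p} :=
    fun i => measurableSet_le (measurable_pi_apply i) measurable_const
  have h2 : ∀ i j : Fin m, MeasurableSet {y : Fin m → ℝ | y j < y i} :=
    fun i j => measurableSet_lt (measurable_pi_apply j) (measurable_pi_apply i)
  have : {y : Fin m → ℝ | Evt k s p y} =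
      (⋂ i, {y : Fin m → ℝ | y i ≤ p}) ∩
      ((⋂ (i : Fin m), ⋂ (j : Fin m), {y : Fin m → ℝ | i < j → (j : ℕ) < k + s → y ∈ {y : Fin m → ℝ | y j < y i}}) ∩
      ((⋂ (i : Fin m), ⋂ (j : Fin m), {y : Fin m → ℝ | i < j → k + s ≤ (i : ℕ) → y ∈ {y : Fin m → ℝ | y j < y i}}) ∩
      (⋂ (i : Fin m), ⋂ (j : Fin m), {y : Fin m → ℝ | (i : ℕ) + 1 = k → (j : ℕ) = k + s → y ∈ {y : Fin m → ℝ | y j < y i}}))) := by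
    ext y; simp [Evt, Set.mem_iInter, Set.mem_setOf_eq]
  rw [this]
  refine (MeasurableSet.iInter h1).inter (MeasurableSet.inter ?_ (MeasurableSet.inter ?_ ?_)) <;>
    refine MeasurableSet.iInter fun i => MeasurableSet.iInter fun j => ?_
  · exact himp _ _ (himp _ _ (h2 i j))
  · exact himp _ _ (himp _ _ (h2 i j))
  · exact himp _ _ (himp _ _ (h2 i j))

lemma nu_peel {m : ℕ} (E : Set (Fin (m+1) → ℝ)) (hE : MeasurableSet E) :
    nu (m+1) E = ∫⁻ c, nu m {y | Fin.cons c y ∈ E} ∂nu1 := by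
  have h := (measurePreserving_piFinSuccAbove (fun _ : Fin (m+1) => nu1) 0).symm
  have h2 : nu (m+1) E = (nu1.prod (nu m))
      ((MeasurableEquiv.piFinSuccAbove (fun _ => ℝ) 0).symm ⁻¹' E) :=
    (h.measure_preimage hE.nullMeasurableSet).symm
  rw [h2, Measure.prod_apply
    ((MeasurableEquiv.piFinSuccAbove (fun _ => ℝ) 0).symm.measurable hE)]
  congr 1
  ext c
  congr 1
  ext y
  simp [MeasurableEquiv.piFinSuccAbove, Fin.insertNthEquiv, Fin.insertNth_zero]

lemma key_integral (m : ℕ) (p : ℝ) (hp : 0 ≤ p) :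
    ∫⁻ c, (Set.Iic p).indicator (fun c => ENNReal.ofReal c ^ m) c ∂nu1
      ≤ ENNReal.ofReal p ^ (m+1) / (m+1) := by
  set q := min 1 p with hq
  have hq0 : 0 ≤ q := le_min zero_le_one hp
  have hqp : q ≤ p := min_le_right _ _
  have h1 : ∫⁻ c, (Set.Iic p).indicator (fun c => ENNReal.ofReal c ^ m) c ∂nu1
      = ∫⁻ c in Set.Icc (0:ℝ) q, ENNReal.ofReal c ^ m ∂volume := by
    have hset : Set.Iic p ∩ Set.Icc (0:ℝ) 1 = Set.Icc (0:ℝ) q := by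
      ext x
      simp only [Set.mem_inter_iff, Set.mem_Iic, Set.mem_Icc, hq, le_min_iff, le_inf_iff]
      constructor
      · rintro ⟨h1, h2, h3⟩; exact ⟨h2, h3, h1⟩
      · rintro ⟨h1, h2, h3⟩; exact ⟨h3, h1, h2⟩
    rw [nu1, lintegral_indicator measurableSet_Iic, Measure.restrict_restrict measurableSet_Iic,
      hset]
  rw [h1]
  have h2 : ∫⁻ c in Set.Icc (0:ℝ) q, ENNReal.ofReal c ^ m ∂volume
      = ∫⁻ c in Set.Icc (0:ℝ) q, ENNReal.ofReal (c ^ m) ∂volume := by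
    refine setLIntegral_congr_fun measurableSet_Icc (fun c hc => ?_)
    rw [ENNReal.ofReal_pow hc.1]
  rw [h2]
  have h3 : ∫⁻ c in Set.Icc (0:ℝ) q, ENNReal.ofReal (c ^ m) ∂volume
      = ENNReal.ofReal (∫ c in Set.Icc (0:ℝ) q, c ^ m ∂volume) := by
    rw [← ofReal_integral_eq_lintegral_ofReal]
    · exact (continuous_pow m).continuousOn.integrableOn_compact isCompact_Icc
    · exact Filter.eventually_of_mem (self_mem_ae_restrict measurableSet_Icc)
        (fun c hc => pow_nonneg hc.1 m)
  rw [h3]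
  have h4 : (∫ c in Set.Icc (0:ℝ) q, c ^ m ∂volume) = q ^ (m+1) / (m+1) := by
    rw [MeasureTheory.integral_Icc_eq_integral_Ioc, ← intervalIntegral.integral_of_le hq0,
      integral_pow]
    simp
  rw [h4]
  have h5 : ENNReal.ofReal (q ^ (m+1) / (m+1)) = ENNReal.ofReal (q^(m+1)) / ((m+1 : ℕ) : ℝ≥0∞) := by
    rw [ENNReal.ofReal_div_of_pos (by positivity)]
    congr 1
    rw [show ((m:ℝ)+1) = ((m+1:ℕ):ℝ) by push_cast; ring, ENNReal.ofReal_natCast]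
  rw [h5, ← ENNReal.ofReal_pow hp]
  have : ((m+1 : ℕ) : ℝ≥0∞) = ((m : ℝ≥0∞) + 1) := by push_cast; ring
  rw [this]
  gcongr

lemma evt_cons {k s : ℕ} {p c : ℝ} {m : ℕ} {y : Fin m → ℝ}
    (h : Evt (k+1) s p (Fin.cons c y)) : c ≤ p ∧ Evt k s (min p c) y := by
  obtain ⟨hle, hc1, hc2, hcr⟩ := h
  have hcp : c ≤ p := by simpa using hle 0
  refine ⟨hcp, ?_, ?_, ?_, ?_⟩
  · intro i
    rcases lt_or_ge ((i:ℕ)+1) (k+1+s) with hlt | hge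
    · have h1 := hc1 0 i.succ (Fin.succ_pos i) (by simpa using hlt)
      simp only [Fin.cons_succ, Fin.cons_zero] at h1
      exact le_min (by simpa using hle i.succ) h1.le
    · have him : (i:ℕ) < m := i.isLt
      have hks : k + s < m := by omega
      set j1 : Fin m := ⟨k+s, hks⟩ with hj1
      have hyi : y i ≤ y j1 := by
        rcases eq_or_lt_of_le (show (j1:ℕ) ≤ (i:ℕ) by simp [hj1]; omega) with he | hl
        · have : i = j1 := Fin.ext he.symm
          rw [this]
        · have h2 := hc2 j1.succ i.succ
            (Fin.succ_lt_succ_iff.mpr (Fin.lt_def.mpr hl))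
            (by simp [Fin.val_succ, hj1]; omega)
          simp only [Fin.cons_succ] at h2
          exact h2.le
      have hz1 : y j1 < c := by
        have hkm : k < m + 1 := by omega
        have hcross := hcr ⟨k, hkm⟩ j1.succ (by simp) (by simp [Fin.val_succ, hj1]; omega)
        rw [Fin.cons_succ] at hcross
        rcases Nat.eq_zero_or_pos k with hk0 | hkpos
        · have he0 : (⟨k, hkm⟩ : Fin (m+1)) = 0 := Fin.ext (by simp [hk0])
          rw [he0, Fin.cons_zero] at hcross; exact hcross
        · have he0 : (⟨k, hkm⟩ : Fin (m+1)) = (⟨k-1, by omega⟩ : Fin m).succ :=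
            Fin.ext (by simp [Fin.val_succ]; omega)
          rw [he0, Fin.cons_succ] at hcross
          have h2 := hc1 0 (⟨k-1, by omega⟩ : Fin m).succ (Fin.succ_pos _)
            (by simp [Fin.val_succ]; omega)
          rw [Fin.cons_succ, Fin.cons_zero] at h2
          exact hcross.trans h2
      exact le_min (by simpa using hle i.succ) (hyi.trans_lt hz1).le
  · intro i j hij hj
    have h1 := hc1 i.succ j.succ (Fin.succ_lt_succ_iff.mpr hij) (by simp [Fin.val_succ]; omega)
    simpa using h1
  · intro i j hij hi
    have h1 := hc2 i.succ j.succ (Fin.succ_lt_succ_iff.mpr hij) (by simp [Fin.val_succ]; omega)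
    simpa using h1
  · intro i j hi hj
    have h1 := hcr i.succ j.succ (by simp [Fin.val_succ]; omega) (by simp [Fin.val_succ]; omega)
    simpa using h1

lemma peel_step {k s : ℕ} {p : ℝ} (hp : 0 ≤ p) {m : ℕ} {C : ℝ≥0∞}
    (IH : ∀ c : ℝ, 0 ≤ c →
      nu m {y : Fin m → ℝ | Evt k s c y} * (Nat.factorial m) ≤ C * ENNReal.ofReal c ^ m) :
    nu (m+1) {y : Fin (m+1) → ℝ | Evt (k+1) s p y} * (Nat.factorial (m+1))
      ≤ C * ENNReal.ofReal p ^ (m+1) := by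
  set E := {y : Fin (m+1) → ℝ | Evt (k+1) s p y} with hEdef
  have hE : MeasurableSet E := measurableSet_evt (k+1) s p (m+1)
  have hpeel := nu_peel E hE
  have hfac0 : ((Nat.factorial m) : ℝ≥0∞) ≠ 0 := by
    exact_mod_cast Nat.cast_ne_zero.mpr (Nat.factorial_ne_zero m)
  have hfact : ((Nat.factorial m) : ℝ≥0∞) ≠ ⊤ := ENNReal.natCast_ne_top _
  have hsec : ∀ c : ℝ, 0 ≤ c → nu m {y | Fin.cons c y ∈ E} ≤
      (Set.Iic p).indicator (fun c => ENNReal.ofReal c ^ m) c * (C / (Nat.factorial m)) := by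
    intro c hc
    by_cases hcp : c ≤ p
    · have hsub : {y : Fin m → ℝ | Fin.cons c y ∈ E} ⊆ {y | Evt k s c y} := by
        intro y hy
        have h2 := (evt_cons hy).2
        rwa [min_eq_right hcp] at h2
      calc nu m {y | Fin.cons c y ∈ E} ≤ nu m {y | Evt k s c y} := measure_mono hsub
        _ ≤ C * ENNReal.ofReal c ^ m / (Nat.factorial m) := by
            rw [ENNReal.le_div_iff_mul_le (Or.inl hfac0) (Or.inl hfact)]
            exact IH c hc
        _ = (Set.Iic p).indicator (fun c => ENNReal.ofReal c ^ m) c * (C / (Nat.factorial m)) := by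
            rw [Set.indicator_of_mem (Set.mem_Iic.mpr hcp)]
            rw [div_eq_mul_inv, div_eq_mul_inv]
            ring
    · have hempty : {y : Fin m → ℝ | Fin.cons c y ∈ E} = ∅ := by
        ext y
        simp only [Set.mem_setOf_eq, Set.mem_empty_iff_false, iff_false]
        intro hy
        exact hcp (evt_cons hy).1
      rw [hempty]
      simp [Set.indicator_of_notMem (fun h => hcp (Set.mem_Iic.mp h))]
  have hmeas : Measurable ((Set.Iic p).indicator (fun c : ℝ => ENNReal.ofReal c ^ m)) :=
    ((ENNReal.measurable_ofReal.comp measurable_id).pow_const m).indicator measurableSet_Iic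
  have hint : ∫⁻ c, nu m {y | Fin.cons c y ∈ E} ∂nu1
      ≤ (ENNReal.ofReal p ^ (m+1) / (m+1)) * (C / (Nat.factorial m)) := by
    calc ∫⁻ c, nu m {y | Fin.cons c y ∈ E} ∂nu1
        ≤ ∫⁻ c, (Set.Iic p).indicator (fun c => ENNReal.ofReal c ^ m) c * (C / (Nat.factorial m)) ∂nu1 := by
          refine lintegral_mono_ae ?_
          refine Filter.eventually_of_mem (self_mem_ae_restrict measurableSet_Icc) ?_
          exact fun c hc => hsec c hc.1
      _ = (∫⁻ c, (Set.Iic p).indicator (fun c => ENNReal.ofReal c ^ m) c ∂nu1) * (C / (Nat.factorial m)) :=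
          lintegral_mul_const _ hmeas
      _ ≤ (ENNReal.ofReal p ^ (m+1) / (m+1)) * (C / (Nat.factorial m)) :=
          mul_le_mul_left (key_integral m p hp) _
  have hfacsucc : ((Nat.factorial (m+1)) : ℝ≥0∞) = ((m+1 : ℕ) : ℝ≥0∞) * ((Nat.factorial m) : ℝ≥0∞) := by
    rw [Nat.factorial_succ]
    push_cast
    ring
  calc nu (m+1) E * (Nat.factorial (m+1)) = (∫⁻ c, nu m {y | Fin.cons c y ∈ E} ∂nu1) * (Nat.factorial (m+1)) := by
        rw [hpeel]
    _ ≤ ((ENNReal.ofReal p ^ (m+1) / (m+1)) * (C / (Nat.factorial m))) * (Nat.factorial (m+1)) :=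
        mul_le_mul_left hint _
    _ = C * ENNReal.ofReal p ^ (m+1) *
        ((((m+1:ℕ)) : ℝ≥0∞) * (((m+1:ℕ)) : ℝ≥0∞)⁻¹ * (((Nat.factorial m) : ℝ≥0∞) * ((Nat.factorial m) : ℝ≥0∞)⁻¹)) := by
        rw [hfacsucc, div_eq_mul_inv, div_eq_mul_inv]
        push_cast
        ring
    _ = C * ENNReal.ofReal p ^ (m+1) := by
        rw [ENNReal.mul_inv_cancel (by exact_mod_cast Nat.succ_ne_zero m) (ENNReal.natCast_ne_top _),
          ENNReal.mul_inv_cancel hfac0 hfact]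
        simp
    _ ≤ C * ENNReal.ofReal p ^ (m+1) := le_rfl

lemma chain_bound (j : ℕ) (p : ℝ) (hp : 0 ≤ p) :
    nu j {y : Fin j → ℝ | Evt j 0 p y} * (Nat.factorial j) ≤ ENNReal.ofReal p ^ j := by
  induction j generalizing p with
  | zero =>
      have hset : {y : Fin 0 → ℝ | Evt 0 0 p y} = Set.univ :=
        Set.eq_univ_of_forall fun y =>
          ⟨fun i => i.elim0, fun i j => i.elim0, fun i j => i.elim0, fun i j => i.elim0⟩
      rw [hset]
      simp
  | succ m IH =>
      have h := peel_step (C := 1) hp (fun c hc => by simpa using IH c hc)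
      simpa using h


lemma evt_zero_split (s t : ℕ) {m : ℕ} (hm : s + t = m) (p : ℝ) :
    nu m {y : Fin m → ℝ | Evt 0 s p y} =
      nu s {y : Fin s → ℝ | Evt s 0 p y} * nu t {y : Fin t → ℝ | Evt t 0 p y} := by
  set e : Fin s ⊕ Fin t ≃ Fin m := finSumFinEquiv.trans (finCongr hm) with he
  have hval1 : ∀ i : Fin s, ((e (Sum.inl i)) : ℕ) = (i : ℕ) := by
    intro i; simp [he]
  have hval2 : ∀ i : Fin t, ((e (Sum.inr i)) : ℕ) = s + (i : ℕ) := by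
    intro i; simp [he]
  set G : (Fin m → ℝ) ≃ᵐ (Fin s → ℝ) × (Fin t → ℝ) :=
    (MeasurableEquiv.piCongrLeft (fun _ => ℝ) e).symm.trans
      (MeasurableEquiv.sumPiEquivProdPi fun _ => ℝ) with hG
  have hGmp : MeasurePreserving G (nu m) ((nu s).prod (nu t)) := by
    have h1 : MeasurePreserving (MeasurableEquiv.piCongrLeft (fun _ => ℝ) e)
        (Measure.pi fun _ : Fin s ⊕ Fin t => nu1) (nu m) :=
      measurePreserving_piCongrLeft (fun _ => nu1) e
    have h2 := measurePreserving_sumPiEquivProdPi (fun _ : Fin s ⊕ Fin t => nu1)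
    exact h2.comp h1.symm
  have hGapp : ∀ (y : Fin m → ℝ),
      G y = (fun i => y (e (Sum.inl i)), fun i => y (e (Sum.inr i))) := by
    intro y
    simp [hG, MeasurableEquiv.trans_apply, MeasurableEquiv.piCongrLeft,
      MeasurableEquiv.sumPiEquivProdPi, Equiv.piCongrLeft_symm_apply]
  have hset : {y : Fin m → ℝ | Evt 0 s p y} =
      G ⁻¹' ({x : Fin s → ℝ | Evt s 0 p x} ×ˢ {x : Fin t → ℝ | Evt t 0 p x}) := by
    ext y
    simp only [Set.mem_setOf_eq, Set.mem_preimage, hGapp, Set.mem_prod]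
    constructor
    · rintro ⟨hle, h1, h2, _⟩
      refine ⟨⟨fun i => hle _, fun i j hij hj => ?_, fun i j hij hi => ?_, fun i j hi hj => ?_⟩,
        ⟨fun i => hle _, fun i j hij hj => ?_, fun i j hij hi => ?_, fun i j hi hj => ?_⟩⟩
      · exact h1 _ _ (by rw [Fin.lt_def, hval1, hval1]; exact hij) (by rw [hval1]; omega)
      · exact absurd hi (by omega)
      · exact absurd hj (by omega)
      · exact h2 _ _ (by rw [Fin.lt_def, hval2, hval2]; omega) (by rw [hval2]; omega)
      · exact absurd hi (by omega)
      · exact absurd hj (by omega)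
    · rintro ⟨hA, hB⟩
      have inlval : ∀ (a : ℕ) (h : a < s), ((e (Sum.inl ⟨a, h⟩)) : ℕ) = a := fun a h => by
        rw [hval1]
      have inrval : ∀ (a : ℕ) (h : a < t), ((e (Sum.inr ⟨a, h⟩)) : ℕ) = s + a := fun a h => by
        rw [hval2]
      refine ⟨fun i => ?_, fun i j hij hj => ?_, fun i j hij hi => ?_, fun i j hi hj => ?_⟩
      · rcases lt_or_ge (i : ℕ) s with hs | hs
        · have h1 : y i = y (e (Sum.inl ⟨(i:ℕ), hs⟩)) := congrArg y (Fin.ext (by rw [inlval]))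
          rw [h1]; exact hA.1 _
        · have hit : (i:ℕ) - s < t := by omega
          have h1 : y i = y (e (Sum.inr ⟨(i:ℕ) - s, hit⟩)) :=
            congrArg y (Fin.ext (by rw [inrval]; omega))
          rw [h1]; exact hB.1 _
      · have hjs : (j:ℕ) < s := by omega
        have his : (i:ℕ) < s := by omega
        have h1 : y i = y (e (Sum.inl ⟨(i:ℕ), his⟩)) := congrArg y (Fin.ext (by rw [inlval]))
        have h2 : y j = y (e (Sum.inl ⟨(j:ℕ), hjs⟩)) := congrArg y (Fin.ext (by rw [inlval]))
        rw [h1, h2]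
        refine hA.2.1 _ _ (Fin.mk_lt_mk.mpr (Fin.lt_def.mp hij)) (by simpa using hjs)
      · have hit : (i:ℕ) - s < t := by omega
        have hjt : (j:ℕ) - s < t := by omega
        have h1 : y i = y (e (Sum.inr ⟨(i:ℕ) - s, hit⟩)) :=
          congrArg y (Fin.ext (by rw [inrval]; omega))
        have h2 : y j = y (e (Sum.inr ⟨(j:ℕ) - s, hjt⟩)) :=
          congrArg y (Fin.ext (by rw [inrval]; omega))
        rw [h1, h2]
        refine hB.2.1 _ _ (Fin.mk_lt_mk.mpr (by have := Fin.lt_def.mp hij; omega))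
          (by simpa using hjt)
      · exact absurd hi (by omega)
  rw [hset, hGmp.measure_preimage
    (((measurableSet_evt s 0 p s).prod (measurableSet_evt t 0 p t)).nullMeasurableSet),
    Measure.prod_prod]

lemma evt_bound (k s t : ℕ) {m : ℕ} (hm : k + s + t = m) (p : ℝ) (hp : 0 ≤ p) :
    nu m {y : Fin m → ℝ | Evt k s p y} * (Nat.factorial m)
      ≤ ((s+t).choose t : ℝ≥0∞) * ENNReal.ofReal p ^ m := by
  induction k generalizing m p with
  | zero =>
      have hm' : s + t = m := by omega
      rw [evt_zero_split s t hm' p]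
      have hA := chain_bound s p hp
      have hB := chain_bound t p hp
      have hfacnat : Nat.factorial m = (s+t).choose t * Nat.factorial t * Nat.factorial s := by
        have h := Nat.choose_mul_factorial_mul_factorial (Nat.le_add_left t s)
        rw [Nat.add_sub_cancel] at h
        rw [← hm', ← h]
      calc nu s {y : Fin s → ℝ | Evt s 0 p y} * nu t {y : Fin t → ℝ | Evt t 0 p y}
          * (Nat.factorial m : ℝ≥0∞)
          = ((s+t).choose t : ℝ≥0∞) *
            ((nu s {y : Fin s → ℝ | Evt s 0 p y} * (Nat.factorial s : ℝ≥0∞)) *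
             (nu t {y : Fin t → ℝ | Evt t 0 p y} * (Nat.factorial t : ℝ≥0∞))) := by
            rw [hfacnat]; push_cast; ring
        _ ≤ ((s+t).choose t : ℝ≥0∞) * (ENNReal.ofReal p ^ s * ENNReal.ofReal p ^ t) :=
            mul_le_mul_right (mul_le_mul' hA hB) _
        _ = ((s+t).choose t : ℝ≥0∞) * ENNReal.ofReal p ^ m := by rw [← pow_add, hm']
  | succ k IH =>
      obtain ⟨m', rfl⟩ : ∃ m', m = m' + 1 := ⟨m - 1, by omega⟩
      have hm' : k + s + t = m' := by omega
      exact peel_step hp (fun c hc => IH hm' c hc)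

lemma map_eq_pi {Ω : Type*} [MeasurableSpace Ω] (μ : Measure Ω) [IsProbabilityMeasure μ]
    {ι : Type*} (f : ι → Ω → ℝ) (hmeas : ∀ v, Measurable (f v))
    (hunif : ∀ v, Measure.map (f v) μ = nu1)
    (hindep : iIndepFun f μ)
    {m : ℕ} (e : Fin m → ι) (he : Function.Injective e) :
    Measure.map (fun ω i => f (e i) ω) μ = nu m := by
  classical
  have hX : Measurable (fun ω i => f (e i) ω) := measurable_pi_lambda _ fun i => hmeas (e i)
  show Measure.map (fun ω i => f (e i) ω) μ = Measure.pi fun _ : Fin m => nu1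
  refine (Measure.pi_eq (μ := fun _ : Fin m => nu1) fun s hs => ?_).symm
  rw [Measure.map_apply hX (MeasurableSet.univ_pi hs)]
  have hpre : (fun ω i => f (e i) ω) ⁻¹' (Set.pi Set.univ s) = ⋂ i, f (e i) ⁻¹' s i := by
    ext ω; simp [Set.mem_pi]
  rw [hpre]
  set g : ι → Set ℝ := fun v => if h : ∃ i, e i = v then s h.choose else Set.univ with hg
  have hge : ∀ i, g (e i) = s i := by
    intro i
    have hex : ∃ j, e j = e i := ⟨i, rfl⟩
    rw [hg]
    simp only [dif_pos hex]
    exact congrArg s (he hex.choose_spec)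
  have hgm : ∀ v ∈ Finset.image e Finset.univ, MeasurableSet (g v) := by
    intro v _
    rw [hg]
    by_cases h : ∃ i, e i = v
    · simp only [dif_pos h]; exact hs _
    · simp only [dif_neg h]; exact MeasurableSet.univ
  have hmul := hindep.measure_inter_preimage_eq_mul (Finset.image e Finset.univ) hgm
  have h1 : (⋂ i, f (e i) ⁻¹' s i) = ⋂ v ∈ Finset.image e Finset.univ, f v ⁻¹' g v := by
    ext ω
    simp only [Set.mem_iInter, Set.mem_preimage, Finset.mem_image, Finset.mem_univ, true_and]
    constructor
    · rintro h v ⟨i, rfl⟩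
      rw [hge i]
      exact h i
    · intro h i
      have h2 := h (e i) ⟨i, rfl⟩
      rwa [hge i] at h2
  rw [h1, hmul, Finset.prod_image (fun a _ b _ hab => he hab)]
  refine Finset.prod_congr rfl fun i _ => ?_
  rw [hge i, ← hunif (e i), Measure.map_apply (hmeas (e i)) (hs i)]

variable {n : ℕ}

noncomputable def meetLen (u v : List (Fin n)) : ℕ :=
  Nat.findGreatest (fun j => u.take j = v.take j) (min u.length v.length)

lemma meetLen_le (u v : List (Fin n)) : meetLen u v ≤ min u.length v.length :=
  Nat.findGreatest_le _

lemma meetLen_take (u v : List (Fin n)) :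
    u.take (meetLen u v) = v.take (meetLen u v) :=
  Nat.findGreatest_spec (P := fun j => u.take j = v.take j) (Nat.zero_le _) (by simp)

lemma meetLen_max (u v : List (Fin n)) {j : ℕ} (h1 : meetLen u v < j)
    (h2 : j ≤ min u.length v.length) : u.take j ≠ v.take j :=
  Nat.findGreatest_is_greatest h1 h2

/-- vertex enumeration for a pair -/

noncomputable def pairIdx (u v : List (Fin n)) (i : ℕ) : List (Fin n) :=
  if i < u.length then u.take (i+1)
  else v.take (meetLen u v + (i - u.length) + 1)

lemma pairIdx_inj (u v : List (Fin n)) :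
    Function.Injective (fun i : Fin (u.length + (v.length - meetLen u v)) =>
      pairIdx u v (i : ℕ)) := by
  have hk := meetLen_le u v
  set k := meetLen u v with hkdef
  set a := u.length
  set b := v.length
  have hka : k ≤ a := hk.trans (min_le_left _ _)
  have hkb : k ≤ b := hk.trans (min_le_right _ _)
  have hlen : ∀ i : Fin (a + (b - k)), (pairIdx u v (i:ℕ)).length =
      if (i:ℕ) < a then (i:ℕ)+1 else k + ((i:ℕ) - a) + 1 := by
    intro i
    have hi := i.isLt
    by_cases h : (i:ℕ) < a <;> simp [pairIdx, show u.length = a from rfl, ← hkdef, h, List.length_take] <;> omega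
  intro i j hij
  have hi := i.isLt
  have hj := j.isLt
  have hlen2 := congrArg List.length hij
  simp only [hlen] at hlen2
  apply Fin.ext
  by_cases h1 : (i:ℕ) < a <;> by_cases h2 : (j:ℕ) < a
  · simp only [if_pos h1, if_pos h2] at hlen2; omega
  · -- i < a ≤ j : contradiction with maximality
    exfalso
    simp only [if_pos h1, if_neg h2] at hlen2
    have heq : u.take ((i:ℕ)+1) = v.take (k + ((j:ℕ) - a) + 1) := by
      simpa [pairIdx, show u.length = a from rfl, ← hkdef, h1, h2] using hij
    rw [← hlen2] at heq
    exact meetLen_max u v (by omega) (by omega) heq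
  · exfalso
    simp only [if_neg h1, if_pos h2] at hlen2
    have heq : u.take ((j:ℕ)+1) = v.take (k + ((i:ℕ) - a) + 1) := by
      simpa [pairIdx, show u.length = a from rfl, ← hkdef, h1, h2] using hij.symm
    rw [← hlen2] at heq
    exact meetLen_max u v (by omega) (by omega) heq
  · simp only [if_neg h1, if_neg h2] at hlen2; omega

lemma pair_subset {Ω : Type*} (ℓ : List (Fin n) → Ω → ℝ) (p : ℝ) (u v : List (Fin n)) :
    {ω | DecreasingPath (fun w => ℓ w ω) p u} ∩ {ω | DecreasingPath (fun w => ℓ w ω) p v}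
      ⊆ (fun ω (i : Fin (u.length + (v.length - meetLen u v))) => ℓ (pairIdx u v (i:ℕ)) ω) ⁻¹'
        {y | Evt (meetLen u v) (u.length - meetLen u v) p y} := by
  have hk := meetLen_le u v
  set k := meetLen u v with hkdef
  set a := u.length
  set b := v.length
  have hka : k ≤ a := hk.trans (min_le_left _ _)
  have hkb : k ≤ b := hk.trans (min_le_right _ _)
  rintro ω ⟨hu, hv⟩
  simp only [Set.mem_setOf_eq] at hu hv
  simp only [Set.mem_preimage, Set.mem_setOf_eq]
  have hks : k + (a - k) = a := by omega
  refine ⟨fun i => ?_, fun i j hij hj => ?_, fun i j hij hi => ?_, fun i j hi hj => ?_⟩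
  · by_cases h : (i:ℕ) < a
    · simpa [pairIdx, show u.length = a from rfl, ← hkdef, h] using hu.2 (i:ℕ) h
    · have hi := i.isLt
      have h2 : k + ((i:ℕ) - a) < b := by omega
      simpa [pairIdx, show u.length = a from rfl, ← hkdef, h] using hv.2 (k + ((i:ℕ) - a)) h2
  · rw [hks] at hj
    have hi' : (i:ℕ) < a := lt_trans (Fin.lt_def.mp hij) hj
    simp only [pairIdx, show u.length = a from rfl, ← hkdef, if_pos hi', if_pos hj]
    exact hu.1 (i:ℕ) (j:ℕ) (Fin.lt_def.mp hij) hj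
  · rw [hks] at hi
    have hi2 := i.isLt
    have hj2 := j.isLt
    have hj' : ¬ ((j:ℕ) < a) := by have := Fin.lt_def.mp hij; omega
    have hi'' : ¬ ((i:ℕ) < a) := by omega
    simp only [pairIdx, show u.length = a from rfl, ← hkdef, if_neg hi'', if_neg hj']
    exact hv.1 (k + ((i:ℕ) - a)) (k + ((j:ℕ) - a))
      (by have := Fin.lt_def.mp hij; omega) (by omega)
  · rw [hks] at hj
    have hj2 := j.isLt
    have ht1 : k < b := by omega
    have hi' : (i:ℕ) < a := by omega
    have hj' : ¬ ((j:ℕ) < a) := by omega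
    simp only [pairIdx, show u.length = a from rfl, ← hkdef, if_pos hi', if_neg hj']
    have h1 : (i:ℕ) + 1 = k := hi
    have h2 : k + ((j:ℕ) - a) + 1 = k + 1 := by omega
    rw [h1, h2]
    have h3 := hv.1 (k-1) k (by omega) ht1
    have h4 : k - 1 + 1 = k := by omega
    rw [h4] at h3
    rw [← meetLen_take u v] at h3
    exact h3

noncomputable def B1 (p : ℝ) (a k t : ℕ) : ℝ≥0∞ :=
  ((if k ≤ a then ((a - k) + t).choose t else 0 : ℕ) : ℝ≥0∞) *
    (ENNReal.ofReal p ^ (a + t) / (Nat.factorial (a+t)))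

lemma tsum_length (h : ℕ → ℝ≥0∞) :
    ∑' w : List (Fin n), h w.length = ∑' t : ℕ, (n:ℝ≥0∞)^t * h t := by
  have h1 := Equiv.tsum_eq (List.equivSigmaTuple (α := Fin n)).symm
    (fun w : List (Fin n) => h w.length)
  rw [← h1]
  have h2 : ∀ σ : (Σ m, Fin m → Fin n),
      h ((List.equivSigmaTuple (α := Fin n)).symm σ).length = h σ.1 := by
    rintro ⟨m, f⟩
    congr 1
    simp [List.equivSigmaTuple]
  calc ∑' σ : (Σ m, Fin m → Fin n), h ((List.equivSigmaTuple (α := Fin n)).symm σ).length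
      = ∑' σ : (Σ m, Fin m → Fin n), h σ.1 := tsum_congr h2
    _ = ∑' t : ℕ, ∑' _f : Fin t → Fin n, h t := ENNReal.tsum_sigma (fun t (_ : Fin t → Fin n) => h t)
    _ = ∑' t : ℕ, (n:ℝ≥0∞)^t * h t := by
        refine tsum_congr fun t => ?_
        rw [tsum_fintype]
        simp [Finset.sum_const, nsmul_eq_mul]

lemma step_kw (p : ℝ) (a : ℕ) :
    ∑' (r : ℕ × List (Fin n)), B1 p a r.1 r.2.length
      = ∑' t : ℕ, (n:ℝ≥0∞)^t * (((a + t + 1).choose (t+1) : ℝ≥0∞) *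
          (ENNReal.ofReal p ^ (a+t) / (Nat.factorial (a+t)))) := by
  calc ∑' (r : ℕ × List (Fin n)), B1 p a r.1 r.2.length
      = ∑' k : ℕ, ∑' w : List (Fin n), B1 p a k w.length := ENNReal.tsum_prod'
    _ = ∑' k : ℕ, ∑' t : ℕ, (n:ℝ≥0∞)^t * B1 p a k t := tsum_congr fun k => tsum_length _
    _ = ∑ k ∈ Finset.range (a+1), ∑' t : ℕ, (n:ℝ≥0∞)^t * B1 p a k t := by
        refine tsum_eq_sum fun k hk => ?_
        have hk' : ¬ (k ≤ a) := by simp at hk; omega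
        simp [B1, hk']
    _ = ∑' t : ℕ, ∑ k ∈ Finset.range (a+1), (n:ℝ≥0∞)^t * B1 p a k t :=
        (Summable.tsum_finsetSum fun _ _ => ENNReal.summable).symm
    _ = ∑' t : ℕ, (n:ℝ≥0∞)^t * (((a + t + 1).choose (t+1) : ℝ≥0∞) *
          (ENNReal.ofReal p ^ (a+t) / (Nat.factorial (a+t)))) := by
        refine tsum_congr fun t => ?_
        rw [← Finset.mul_sum]
        congr 1
        unfold B1
        rw [← Finset.sum_mul]
        congr 1
        rw [← Nat.cast_sum]
        congr 1
        calc ∑ k ∈ Finset.range (a+1), (if k ≤ a then ((a-k)+t).choose t else 0)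
            = ∑ k ∈ Finset.range (a+1), ((a-k)+t).choose t :=
              Finset.sum_congr rfl fun k hk => if_pos (by simp at hk; omega)
          _ = ∑ j ∈ Finset.range (a+1), ((j+t).choose t) := by
              rw [← Finset.sum_range_reflect]
              refine Finset.sum_congr rfl fun j hj => ?_
              simp only [Finset.mem_range] at hj
              congr 2
              omega
          _ = (a + t + 1).choose (t+1) := Nat.sum_range_add_choose a t

lemma tsum_pow_div_factorial_le (x : ℝ) (hx : 0 ≤ x) :
    ∑' j : ℕ, ENNReal.ofReal x ^ j / (Nat.factorial j : ℝ≥0∞)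
      ≤ ENNReal.ofReal (Real.exp x) := by
  have hterm : ∀ j : ℕ, ENNReal.ofReal x ^ j / (Nat.factorial j : ℝ≥0∞)
      = ENNReal.ofReal (x^j / (Nat.factorial j)) := by
    intro j
    rw [ENNReal.ofReal_div_of_pos (by positivity), ENNReal.ofReal_pow hx,
      ENNReal.ofReal_natCast]
  rw [tsum_congr hterm, ENNReal.tsum_eq_iSup_sum]
  refine iSup_le fun s => ?_
  rw [← ENNReal.ofReal_sum_of_nonneg (fun i _ => by positivity)]
  refine ENNReal.ofReal_le_ofReal ?_
  have hsub : s ⊆ Finset.range (s.sup id + 1) := fun j hj =>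
    Finset.mem_range.mpr (Nat.lt_succ_of_le (Finset.le_sup (f := id) hj))
  calc ∑ j ∈ s, x^j / (Nat.factorial j)
      ≤ ∑ j ∈ Finset.range (s.sup id + 1), x^j / (Nat.factorial j) :=
        Finset.sum_le_sum_of_subset_of_nonneg hsub (fun i _ _ => by positivity)
    _ ≤ Real.exp x := Real.sum_le_exp_of_nonneg hx _

lemma total_bound (p : ℝ) (hp : 0 ≤ p) :
    ∑' q : List (Fin n) × List (Fin n),
      (((q.1.length - meetLen q.1 q.2) + (q.2.length - meetLen q.1 q.2)).choose
        (q.2.length - meetLen q.1 q.2) : ℝ≥0∞)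
        * ENNReal.ofReal p ^ (q.1.length + (q.2.length - meetLen q.1 q.2))
        / (Nat.factorial (q.1.length + (q.2.length - meetLen q.1 q.2)))
      ≤ ENNReal.ofReal (5 * Real.exp (2 * n * p)) := by
  set P := ENNReal.ofReal p with hP
  -- Step 1: inject pairs into triples
  have step1 : ∑' q : List (Fin n) × List (Fin n),
      (((q.1.length - meetLen q.1 q.2) + (q.2.length - meetLen q.1 q.2)).choose
        (q.2.length - meetLen q.1 q.2) : ℝ≥0∞)
        * P ^ (q.1.length + (q.2.length - meetLen q.1 q.2))
        / (Nat.factorial (q.1.length + (q.2.length - meetLen q.1 q.2)))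
      ≤ ∑' r : List (Fin n) × ℕ × List (Fin n), B1 p r.1.length r.2.1 r.2.2.length := by
    refine Summable.tsum_le_tsum_of_inj
      (fun q : List (Fin n) × List (Fin n) =>
        (q.1, meetLen q.1 q.2, q.2.drop (meetLen q.1 q.2)))
      ?_ (fun _ _ => zero_le) ?_ ENNReal.summable ENNReal.summable
    · rintro ⟨u, v⟩ ⟨u', v'⟩ h
      simp only [Prod.mk.injEq] at h
      obtain ⟨h1, h2, h3⟩ := h
      subst h1
      have hv : v = v.take (meetLen u v) ++ v.drop (meetLen u v) :=
        (List.take_append_drop _ _).symm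
      have hv' : v' = v'.take (meetLen u v') ++ v'.drop (meetLen u v') :=
        (List.take_append_drop _ _).symm
      have e1 : v.take (meetLen u v) = u.take (meetLen u v) := (meetLen_take u v).symm
      have e2 : v'.take (meetLen u v') = u.take (meetLen u v') := (meetLen_take u v').symm
      refine Prod.ext rfl ?_
      simp only
      rw [hv, hv', e1, e2, h3, h2]
    · rintro ⟨u, v⟩
      have hk := meetLen_le u v
      have hka : meetLen u v ≤ u.length := hk.trans (min_le_left _ _)
      simp only [B1, List.length_drop, if_pos hka]
      rw [mul_div_assoc, hP]
  -- Step 2+3: evaluate the triple sum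
  have step2 : ∑' r : List (Fin n) × ℕ × List (Fin n), B1 p r.1.length r.2.1 r.2.2.length
      = ∑' a : ℕ, (n:ℝ≥0∞)^a * ∑' t : ℕ, (n:ℝ≥0∞)^t *
          (((a + t + 1).choose (t+1) : ℝ≥0∞) * (P ^ (a+t) / (Nat.factorial (a+t)))) := by
    calc ∑' r : List (Fin n) × ℕ × List (Fin n), B1 p r.1.length r.2.1 r.2.2.length
        = ∑' u : List (Fin n), ∑' r : ℕ × List (Fin n), B1 p u.length r.1 r.2.length :=
          ENNReal.tsum_prod'
      _ = ∑' u : List (Fin n), (fun a => ∑' t : ℕ, (n:ℝ≥0∞)^t *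
            (((a + t + 1).choose (t+1) : ℝ≥0∞) * (P ^ (a+t) / (Nat.factorial (a+t))))) u.length :=
          tsum_congr fun u => step_kw p u.length
      _ = _ := tsum_length (fun a => ∑' t : ℕ, (n:ℝ≥0∞)^t *
            (((a + t + 1).choose (t+1) : ℝ≥0∞) * (P ^ (a+t) / (Nat.factorial (a+t)))))
  -- Step 4: diagonal regrouping
  have step4 : ∑' a : ℕ, (n:ℝ≥0∞)^a * ∑' t : ℕ, (n:ℝ≥0∞)^t *
          (((a + t + 1).choose (t+1) : ℝ≥0∞) * (P ^ (a+t) / (Nat.factorial (a+t))))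
      ≤ ∑' z : ℕ × ℕ, ((if z.2 ≤ z.1 then (z.1+1).choose (z.2+1) else 0 : ℕ) : ℝ≥0∞) *
          ((n:ℝ≥0∞)^z.1 * (P ^ z.1 / (Nat.factorial z.1))) := by
    have hre : (∑' a : ℕ, (n:ℝ≥0∞)^a * ∑' t : ℕ, (n:ℝ≥0∞)^t *
          (((a + t + 1).choose (t+1) : ℝ≥0∞) * (P ^ (a+t) / (Nat.factorial (a+t)))))
        = ∑' z : ℕ × ℕ, (n:ℝ≥0∞)^z.1 * ((n:ℝ≥0∞)^z.2 *
          (((z.1 + z.2 + 1).choose (z.2+1) : ℝ≥0∞) *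
            (P ^ (z.1+z.2) / (Nat.factorial (z.1+z.2))))) := by
      calc (∑' a : ℕ, (n:ℝ≥0∞)^a * ∑' t : ℕ, (n:ℝ≥0∞)^t *
          (((a + t + 1).choose (t+1) : ℝ≥0∞) * (P ^ (a+t) / (Nat.factorial (a+t)))))
          = ∑' a : ℕ, ∑' t : ℕ, (n:ℝ≥0∞)^a * ((n:ℝ≥0∞)^t *
            (((a + t + 1).choose (t+1) : ℝ≥0∞) * (P ^ (a+t) / (Nat.factorial (a+t))))) :=
            tsum_congr fun a => ENNReal.tsum_mul_left.symm
        _ = ∑' z : ℕ × ℕ, (n:ℝ≥0∞)^z.1 * ((n:ℝ≥0∞)^z.2 *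
            (((z.1 + z.2 + 1).choose (z.2+1) : ℝ≥0∞) *
              (P ^ (z.1+z.2) / (Nat.factorial (z.1+z.2))))) :=
            (ENNReal.tsum_prod' (f := fun z : ℕ × ℕ => (n:ℝ≥0∞)^z.1 * ((n:ℝ≥0∞)^z.2 *
              (((z.1 + z.2 + 1).choose (z.2+1) : ℝ≥0∞) *
                (P ^ (z.1+z.2) / (Nat.factorial (z.1+z.2))))))).symm
    rw [hre]
    refine Summable.tsum_le_tsum_of_inj (fun z : ℕ × ℕ => (z.1 + z.2, z.2))
      ?_ (fun _ _ => zero_le) ?_ ENNReal.summable ENNReal.summable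
    · rintro ⟨a, t⟩ ⟨a', t'⟩ h
      simp only [Prod.mk.injEq] at h
      obtain ⟨h1, h2⟩ := h
      subst h2
      exact Prod.ext (by omega) rfl
    · rintro ⟨a, t⟩
      simp only [if_pos (Nat.le_add_left t a)]
      refine le_of_eq ?_
      rw [pow_add]
      ring
  -- Step 5: final evaluation
  have step5 : ∑' z : ℕ × ℕ, ((if z.2 ≤ z.1 then (z.1+1).choose (z.2+1) else 0 : ℕ) : ℝ≥0∞) *
          ((n:ℝ≥0∞)^z.1 * (P ^ z.1 / (Nat.factorial z.1)))
      ≤ ENNReal.ofReal (5 * Real.exp (2 * n * p)) := by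
    rw [ENNReal.tsum_prod']
    have hj : ∀ j : ℕ, ∑' t : ℕ, ((if t ≤ j then (j+1).choose (t+1) else 0 : ℕ) : ℝ≥0∞) *
        ((n:ℝ≥0∞)^j * (P ^ j / (Nat.factorial j)))
        ≤ (2:ℝ≥0∞)^(j+1) * ((n:ℝ≥0∞)^j * (P ^ j / (Nat.factorial j))) := by
      intro j
      rw [ENNReal.tsum_mul_right]
      refine mul_le_mul_left ?_ _
      have hsum : ∑' t : ℕ, ((if t ≤ j then (j+1).choose (t+1) else 0 : ℕ) : ℝ≥0∞)
          = ((∑ t ∈ Finset.range (j+1), (j+1).choose (t+1) : ℕ) : ℝ≥0∞) := by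
        rw [tsum_eq_sum (s := Finset.range (j+1)) (fun t ht => by
          have h1 : ¬ (t ≤ j) := by simp at ht; omega
          simp [h1]), ← Nat.cast_sum]
        congr 1
        exact Finset.sum_congr rfl fun t ht => if_pos (by simp at ht; omega)
      rw [hsum]
      have hnat : ∑ t ∈ Finset.range (j+1), (j+1).choose (t+1) = 2^(j+1) - 1 := by
        have h0 := Nat.sum_range_choose (j+1)
        rw [Finset.sum_range_succ' (fun i => (j+1).choose i) (j+1)] at h0
        simp at h0
        omega
      rw [hnat]
      calc ((2^(j+1) - 1 : ℕ) : ℝ≥0∞) ≤ ((2^(j+1) : ℕ) : ℝ≥0∞) := by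
            exact_mod_cast Nat.sub_le _ _
        _ = (2:ℝ≥0∞)^(j+1) := by push_cast; ring
    calc ∑' j : ℕ, ∑' t : ℕ, ((if t ≤ j then (j+1).choose (t+1) else 0 : ℕ) : ℝ≥0∞) *
          ((n:ℝ≥0∞)^j * (P ^ j / (Nat.factorial j)))
        ≤ ∑' j : ℕ, (2:ℝ≥0∞)^(j+1) * ((n:ℝ≥0∞)^j * (P ^ j / (Nat.factorial j))) :=
          ENNReal.tsum_le_tsum hj
      _ = 2 * ∑' j : ℕ, (ENNReal.ofReal (2 * n * p))^j / (Nat.factorial j) := by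
          rw [← ENNReal.tsum_mul_left]
          refine tsum_congr fun j => ?_
          have hX : ENNReal.ofReal (2 * n * p) = 2 * (n:ℝ≥0∞) * P := by
            rw [show (2:ℝ) * n * p = ((2*n : ℕ) : ℝ) * p by push_cast; ring,
              ENNReal.ofReal_mul (by positivity), ENNReal.ofReal_natCast, hP]
            push_cast
            ring
          rw [hX, mul_pow, mul_pow, pow_succ]
          simp only [div_eq_mul_inv]
          ring
      _ ≤ 2 * ENNReal.ofReal (Real.exp (2 * n * p)) :=
          mul_le_mul_right (tsum_pow_div_factorial_le _ (by positivity)) _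
      _ ≤ ENNReal.ofReal (5 * Real.exp (2 * n * p)) := by
          rw [ENNReal.ofReal_mul (by norm_num)]
          refine mul_le_mul_left ?_ _
          rw [show ((5:ℝ)) = ((5:ℕ):ℝ) by norm_num, ENNReal.ofReal_natCast]
          norm_num
  exact le_trans step1 (le_trans (le_of_eq step2) (le_trans step4 step5))

lemma measurableSet_dec {Ω : Type*} [MeasurableSpace Ω] (ℓ : List (Fin n) → Ω → ℝ)
    (hmeas : ∀ v, Measurable (ℓ v)) (p : ℝ) (v : List (Fin n)) :
    MeasurableSet {ω | DecreasingPath (fun w => ℓ w ω) p v} := by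
  have himp : ∀ (P : Prop) (S : Set Ω), MeasurableSet S →
      MeasurableSet {ω : Ω | P → ω ∈ S} := by
    intro P S hS
    by_cases h : P
    · simp only [h, forall_true_left]; exact hS
    · simp only [h]; simp
  have hset : {ω | DecreasingPath (fun w => ℓ w ω) p v} =
      (⋂ (i : ℕ), ⋂ (j : ℕ), {ω : Ω | i < j → j < v.length →
        ω ∈ {ω : Ω | ℓ (v.take (j+1)) ω < ℓ (v.take (i+1)) ω}}) ∩
      (⋂ (i : ℕ), {ω : Ω | i < v.length → ω ∈ {ω : Ω | ℓ (v.take (i+1)) ω ≤ p}}) := by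
    ext ω
    simp only [Set.mem_setOf_eq, Set.mem_inter_iff, Set.mem_iInter, DecreasingPath]
  rw [hset]
  refine MeasurableSet.inter ?_ ?_
  · refine MeasurableSet.iInter fun i => MeasurableSet.iInter fun j => ?_
    exact himp _ _ (himp _ _ (measurableSet_lt (hmeas _) (hmeas _)))
  · refine MeasurableSet.iInter fun i => ?_
    exact himp _ _ (measurableSet_le (hmeas _) measurable_const)

lemma pair_bound {Ω : Type*} [MeasurableSpace Ω] (μ : Measure Ω) [IsProbabilityMeasure μ]
    (ℓ : List (Fin n) → Ω → ℝ) (hmeas : ∀ v, Measurable (ℓ v))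
    (hunif : ∀ v, Measure.map (ℓ v) μ = nu1)
    (hindep : iIndepFun ℓ μ) (p : ℝ) (hp : 0 ≤ p)
    (u v : List (Fin n)) :
    μ ({ω | DecreasingPath (fun w => ℓ w ω) p u} ∩
        {ω | DecreasingPath (fun w => ℓ w ω) p v})
      ≤ (((u.length - meetLen u v) + (v.length - meetLen u v)).choose
          (v.length - meetLen u v) : ℝ≥0∞)
        * ENNReal.ofReal p ^ (u.length + (v.length - meetLen u v))
        / (Nat.factorial (u.length + (v.length - meetLen u v))) := by
  have hk := meetLen_le u v
  have hka : meetLen u v ≤ u.length := hk.trans (min_le_left _ _)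
  have hkb : meetLen u v ≤ v.length := hk.trans (min_le_right _ _)
  set k := meetLen u v with hkdef
  set a := u.length with hadef
  set b := v.length with hbdef
  set m := a + (b - k) with hm
  have hX : Measurable (fun ω (i : Fin m) => ℓ (pairIdx u v (i:ℕ)) ω) :=
    measurable_pi_lambda _ fun i => hmeas _
  have h1 : μ ({ω | DecreasingPath (fun w => ℓ w ω) p u} ∩
        {ω | DecreasingPath (fun w => ℓ w ω) p v})
      ≤ μ ((fun ω (i : Fin m) => ℓ (pairIdx u v (i:ℕ)) ω) ⁻¹'
          {y | Evt k (a - k) p y}) :=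
    measure_mono (pair_subset ℓ p u v)
  have h2 : μ ((fun ω (i : Fin m) => ℓ (pairIdx u v (i:ℕ)) ω) ⁻¹'
      {y | Evt k (a - k) p y}) = nu m {y : Fin m → ℝ | Evt k (a - k) p y} := by
    rw [← Measure.map_apply hX (measurableSet_evt k (a - k) p m),
      map_eq_pi μ ℓ hmeas hunif hindep _ (pairIdx_inj u v)]
  have h3 := evt_bound k (a - k) (b - k) (show k + (a - k) + (b - k) = m by omega) p hp
  refine h1.trans (le_of_eq h2 |>.trans ?_)
  rw [ENNReal.le_div_iff_mul_le
    (Or.inl (by exact_mod_cast Nat.cast_ne_zero.mpr (Nat.factorial_ne_zero m)))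
    (Or.inl (ENNReal.natCast_ne_top _))]
  exact h3

end Statement6Aux

open Statement6Aux in
/-- Second moment bound: `E|T_{n,p}|² ≤ 5 e^{2np} = 5 (E|T_{n,p}|)²`. -/
theorem statement_6
    {Ω : Type*} [MeasurableSpace Ω] (μ : Measure Ω) [IsProbabilityMeasure μ]
    (n : ℕ) (hn : 1 ≤ n) (p : ℝ) (hp : p ∈ Set.Ioc (0 : ℝ) 1)
    (ℓ : List (Fin n) → Ω → ℝ)
    (hmeas : ∀ v, Measurable (ℓ v))
    (hunif : ∀ v, Measure.map (ℓ v) μ = volume.restrict (Set.Icc (0 : ℝ) 1))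
    (hindep : iIndepFun ℓ μ) :
    ∫⁻ ω, (treeSize n p (fun v => ℓ v ω)) ^ 2 ∂μ
      ≤ ENNReal.ofReal (5 * Real.exp (2 * n * p)) := by
  classical
  obtain ⟨hp0, hp1⟩ := hp
  have hp0' : (0:ℝ) ≤ p := hp0.le
  set A : List (Fin n) → Set Ω := fun v => {ω | DecreasingPath (fun w => ℓ w ω) p v} with hAdef
  have hA : ∀ v, MeasurableSet (A v) := fun v => measurableSet_dec ℓ hmeas p v
  have hts : ∀ ω, treeSize n p (fun v => ℓ v ω) = ∑' v : List (Fin n), (A v).indicator 1 ω := by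
    intro ω
    refine tsum_congr fun v => ?_
    by_cases h : DecreasingPath (fun w => ℓ w ω) p v
    · simp [h, hAdef, Set.indicator_of_mem, Set.mem_setOf_eq]
    · simp [h, hAdef, Set.indicator_of_notMem, Set.mem_setOf_eq]
  have hsq : ∀ ω, (treeSize n p (fun v => ℓ v ω)) ^ 2
      = ∑' q : List (Fin n) × List (Fin n), (A q.1 ∩ A q.2).indicator 1 ω := by
    intro ω
    rw [hts, sq]
    calc (∑' v, (A v).indicator 1 ω) * (∑' v, (A v).indicator 1 ω)
        = ∑' u : List (Fin n), (A u).indicator 1 ω * ∑' v, (A v).indicator 1 ω :=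
          ENNReal.tsum_mul_right.symm
      _ = ∑' u : List (Fin n), ∑' v : List (Fin n),
            (A u).indicator 1 ω * (A v).indicator 1 ω :=
          tsum_congr fun u => ENNReal.tsum_mul_left.symm
      _ = ∑' q : List (Fin n) × List (Fin n), (A q.1).indicator 1 ω * (A q.2).indicator 1 ω :=
          (ENNReal.tsum_prod' (f := fun q : List (Fin n) × List (Fin n) =>
            (A q.1).indicator 1 ω * (A q.2).indicator 1 ω)).symm
      _ = ∑' q : List (Fin n) × List (Fin n), (A q.1 ∩ A q.2).indicator 1 ω := by
          refine tsum_congr fun q => ?_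
          by_cases h1 : ω ∈ A q.1 <;> by_cases h2 : ω ∈ A q.2 <;>
            simp [Set.indicator_apply, h1, h2, Set.mem_inter_iff]
  calc ∫⁻ ω, (treeSize n p (fun v => ℓ v ω)) ^ 2 ∂μ
      = ∫⁻ ω, ∑' q : List (Fin n) × List (Fin n), (A q.1 ∩ A q.2).indicator 1 ω ∂μ := by
        refine lintegral_congr fun ω => hsq ω
    _ = ∑' q : List (Fin n) × List (Fin n), ∫⁻ ω, (A q.1 ∩ A q.2).indicator 1 ω ∂μ :=
        lintegral_tsum fun q =>
          ((measurable_one.indicator ((hA q.1).inter (hA q.2))).aemeasurable)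
    _ = ∑' q : List (Fin n) × List (Fin n), μ (A q.1 ∩ A q.2) := by
        refine tsum_congr fun q => ?_
        rw [lintegral_indicator_one ((hA q.1).inter (hA q.2))]
    _ ≤ ∑' q : List (Fin n) × List (Fin n),
          (((q.1.length - meetLen q.1 q.2) + (q.2.length - meetLen q.1 q.2)).choose
            (q.2.length - meetLen q.1 q.2) : ℝ≥0∞)
          * ENNReal.ofReal p ^ (q.1.length + (q.2.length - meetLen q.1 q.2))
          / (Nat.factorial (q.1.length + (q.2.length - meetLen q.1 q.2))) :=
        ENNReal.tsum_le_tsum fun q =>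
          pair_bound μ ℓ hmeas (fun v => hunif v) hindep p hp0' q.1 q.2
    _ ≤ ENNReal.ofReal (5 * Real.exp (2 * n * p)) := total_bound p hp0'
end
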